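/- arXiv:2505.08131 — 8 statements merged into one kernel-verified Lean document; each statement's English description precedes it below -/
import Mathlib

section
/- Let m ≥ 4 be an even integer and let G_m be the graph with vertex set {v_{i,j} : 1 ≤ i ≤ m, 1 ≤ j ≤ 6} and the following edges: for each i, the 5-cycle v_{i,1}v_{i,2}, v_{i,2}v_{i,3}, v_{i,3}v_{i,4}, v_{i,4}v_{i,5}, v_{i,5}v_{i,1}; for each i, the edges v_{i,6}v_{i,j} for j ∈ {1,2,3,4}; for each even i, the edges v_{i,1}v_{i+1,1}, v_{i,2}v_{i+1,5}, v_{i,5}v_{i+1,2}; and for each odd i, the edges v_{i,4}v_{i+1,4}, v_{i,3}v_{i+1,5}, v_{i,5}v_{i+1,3}, where the first index is taken modulo m. Let S be the set consisting of v_{i,1} and v_{i,4} for each odd i, together with v_{i,2}, v_{i,3}, v_{i,5}, v_{i,6} for each even i. Then |S| = 3m and the graph G_m − S has exactly 2m connected components; consequently the toughness of G_m is at most 3/2. -/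
open SimpleGraph

/-- `numComp G S` is ω(G − S): the number of connected components of the graph
obtained from `G` by deleting the vertex set `S`. -/
noncomputable def numComp {V : Type*} (G : SimpleGraph V) (S : Set V) : ℕ :=
  Nat.card (G.induce Sᶜ).ConnectedComponent

/-- Base (asymmetric) edge relation of the graph `G_m` from the paper.
Vertices are pairs `(i, j)` with `i : ZMod m` (paper index `i` taken mod `m`) and
`j : Fin 6` (paper index `j` shifted to `0,…,5`).  For each block `i` we have the
5-cycle `j = 0,1,2,3,4` and the hub `j = 5` joined to `j = 0,1,2,3`; for even `i`
(paper-even, since `m` is even) the cross edges `(i,0)(i+1,0)`, `(i,1)(i+1,4)`,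
`(i,4)(i+1,1)`; for odd `i` the cross edges `(i,3)(i+1,3)`, `(i,2)(i+1,4)`,
`(i,4)(i+1,2)`. -/
def gmRel (m : ℕ) (x y : ZMod m × Fin 6) : Prop :=
  (x.1 = y.1 ∧
    ((x.2 = 0 ∧ y.2 = 1) ∨ (x.2 = 1 ∧ y.2 = 2) ∨ (x.2 = 2 ∧ y.2 = 3) ∨
     (x.2 = 3 ∧ y.2 = 4) ∨ (x.2 = 4 ∧ y.2 = 0) ∨
     (x.2 = 5 ∧ (y.2 = 0 ∨ y.2 = 1 ∨ y.2 = 2 ∨ y.2 = 3)))) ∨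
  (y.1 = x.1 + 1 ∧ x.1.val % 2 = 0 ∧
    ((x.2 = 0 ∧ y.2 = 0) ∨ (x.2 = 1 ∧ y.2 = 4) ∨ (x.2 = 4 ∧ y.2 = 1))) ∨
  (y.1 = x.1 + 1 ∧ x.1.val % 2 = 1 ∧
    ((x.2 = 3 ∧ y.2 = 3) ∨ (x.2 = 2 ∧ y.2 = 4) ∨ (x.2 = 4 ∧ y.2 = 2)))

/-- The graph `G_m`. -/
def Gm (m : ℕ) : SimpleGraph (ZMod m × Fin 6) := SimpleGraph.fromRel (gmRel m)

/-- The cut-set `S` of STATEMENT 2: the vertices `v_{i,1}, v_{i,4}` for odd `i`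
together with `v_{i,2}, v_{i,3}, v_{i,5}, v_{i,6}` for even `i`
(zero-indexed in the second coordinate). -/
def gmCut (m : ℕ) : Set (ZMod m × Fin 6) :=
  {x | (x.1.val % 2 = 1 ∧ (x.2 = 0 ∨ x.2 = 3)) ∨
       (x.1.val % 2 = 0 ∧ (x.2 = 1 ∨ x.2 = 2 ∨ x.2 = 4 ∨ x.2 = 5))}

section Aux
variable {m : ℕ}

lemma gm_val_add_one (hm2 : 2 ≤ m) (hme : Even m) (i : ZMod m) :
    (i + 1).val % 2 = (i.val + 1) % 2 := by
  haveI : NeZero m := ⟨by omega⟩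
  have h1 : (1 : ZMod m).val = 1 := by
    rw [ZMod.val_one_eq_one_mod]; exact Nat.mod_eq_of_lt (by omega)
  rw [ZMod.val_add, h1, Nat.mod_mod_of_dvd _ hme.two_dvd]

/-- class map: second coordinate of the component invariant. -/
def fB (x : ZMod m × Fin 6) : ZMod m × Bool := (x.1, decide (x.2 = 3 ∨ x.2 = 4))


private lemma dec_block : ∀ (p : Fin 2) (j : Fin 6),
    ¬((p:ℕ) = 1 ∧ (j = 0 ∨ j = 3) ∨ (p:ℕ) = 0 ∧ (j = 1 ∨ j = 2 ∨ j = 4 ∨ j = 5)) →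
      ∀ (k : Fin 6),
        j = 0 ∧ k = 1 ∨
            j = 1 ∧ k = 2 ∨ j = 2 ∧ k = 3 ∨ j = 3 ∧ k = 4 ∨ j = 4 ∧ k = 0 ∨
              j = 5 ∧ (k = 0 ∨ k = 1 ∨ k = 2 ∨ k = 3) →
          ¬((p:ℕ) = 1 ∧ (k = 0 ∨ k = 3) ∨ (p:ℕ) = 0 ∧ (k = 1 ∨ k = 2 ∨ k = 4 ∨ k = 5)) →
            decide (j = 3 ∨ j = 4) = decide (k = 3 ∨ k = 4) := by decide

private lemma dec_cross0 : ∀ (j k : Fin 6),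
    ¬((0:ℕ) = 1 ∧ (j = 0 ∨ j = 3) ∨ (0:ℕ) = 0 ∧ (j = 1 ∨ j = 2 ∨ j = 4 ∨ j = 5)) →
    ¬((1:ℕ) = 1 ∧ (k = 0 ∨ k = 3) ∨ (1:ℕ) = 0 ∧ (k = 1 ∨ k = 2 ∨ k = 4 ∨ k = 5)) →
    (j = 0 ∧ k = 0 ∨ j = 1 ∧ k = 4 ∨ j = 4 ∧ k = 1) → False := by decide

private lemma dec_cross1 : ∀ (j k : Fin 6),
    ¬((1:ℕ) = 1 ∧ (j = 0 ∨ j = 3) ∨ (1:ℕ) = 0 ∧ (j = 1 ∨ j = 2 ∨ j = 4 ∨ j = 5)) →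
    ¬((0:ℕ) = 1 ∧ (k = 0 ∨ k = 3) ∨ (0:ℕ) = 0 ∧ (k = 1 ∨ k = 2 ∨ k = 4 ∨ k = 5)) →
    (j = 3 ∧ k = 3 ∨ j = 2 ∧ k = 4 ∨ j = 4 ∧ k = 2) → False := by decide

lemma fB_eq_of_rel (hm2 : 2 ≤ m) (hme : Even m) {x y : ZMod m × Fin 6}
    (hx : x ∉ gmCut m) (hy : y ∉ gmCut m) (h : gmRel m x y) : fB x = fB y := by
  obtain ⟨i, j⟩ := x; obtain ⟨i', k⟩ := y
  simp only [gmCut, Set.mem_setOf_eq] at hx hy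
  rcases h with ⟨hi, hj⟩ | ⟨hi, hp, hj⟩ | ⟨hi, hp, hj⟩
  · simp only at hi hj
    subst hi
    simp only [fB, Prod.mk.injEq, true_and]
    rcases Nat.mod_two_eq_zero_or_one i.val with hp | hp
    · rw [hp] at hx hy; exact dec_block 0 j hx k hj hy
    · rw [hp] at hx hy; exact dec_block 1 j hx k hj hy
  · exfalso
    simp only at hi hp hj
    have hp' : i'.val % 2 = 1 := by
      rw [hi, gm_val_add_one hm2 hme]; omega
    rw [hp] at hx; rw [hp'] at hy
    exact dec_cross0 j k hx hy hj
  · exfalso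
    simp only at hi hp hj
    have hp' : i'.val % 2 = 0 := by
      rw [hi, gm_val_add_one hm2 hme]; omega
    rw [hp] at hx; rw [hp'] at hy
    exact dec_cross1 j k hx hy hj

end Aux

private lemma dec_survive0 : ∀ j : Fin 6,
    ¬((0:ℕ) = 1 ∧ (j = 0 ∨ j = 3) ∨ (0:ℕ) = 0 ∧ (j = 1 ∨ j = 2 ∨ j = 4 ∨ j = 5)) →
    j = 0 ∨ j = 3 := by decide

private lemma dec_survive1 : ∀ j : Fin 6,
    ¬((1:ℕ) = 1 ∧ (j = 0 ∨ j = 3) ∨ (1:ℕ) = 0 ∧ (j = 1 ∨ j = 2 ∨ j = 4 ∨ j = 5)) →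
    j = 1 ∨ j = 2 ∨ j = 4 ∨ j = 5 := by decide

private lemma dec_even_b : ∀ j k : Fin 6, (j = 0 ∨ j = 3) → (k = 0 ∨ k = 3) →
    decide (j = 3 ∨ j = 4) = decide (k = 3 ∨ k = 4) → j = k := by decide

private lemma dec_odd_b : ∀ j k : Fin 6,
    (j = 1 ∨ j = 2 ∨ j = 4 ∨ j = 5) → (k = 1 ∨ k = 2 ∨ k = 4 ∨ k = 5) →
    decide (j = 3 ∨ j = 4) = decide (k = 3 ∨ k = 4) →
    (j = 4 ∧ k = 4) ∨ ((j = 1 ∨ j = 2 ∨ j = 5) ∧ (k = 1 ∨ k = 2 ∨ k = 5)) := by decide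

section Main
variable {m : ℕ}

lemma fB_eq_of_adj (hm2 : 2 ≤ m) (hme : Even m) {x y : ↥(gmCut m)ᶜ}
    (h : ((Gm m).induce (gmCut m)ᶜ).Adj x y) : fB x.1 = fB y.1 := by
  have hadj : (Gm m).Adj x.1 y.1 := h
  rw [Gm, SimpleGraph.fromRel_adj] at hadj
  rcases hadj.2 with h' | h'
  · exact fB_eq_of_rel hm2 hme x.2 y.2 h'
  · exact (fB_eq_of_rel hm2 hme y.2 x.2 h').symm

lemma fB_eq_of_reachable (hm2 : 2 ≤ m) (hme : Even m) {x y : ↥(gmCut m)ᶜ}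
    (h : ((Gm m).induce (gmCut m)ᶜ).Reachable x y) : fB x.1 = fB y.1 := by
  obtain ⟨p⟩ := h
  induction p with
  | nil => rfl
  | cons ha _ ih => exact (fB_eq_of_adj hm2 hme ha).trans ih

lemma gm_adj (i : ZMod m) {j k : Fin 6} (hne : j ≠ k)
    (h : gmRel m (i, j) (i, k) ∨ gmRel m (i, k) (i, j)) : (Gm m).Adj (i, j) (i, k) := by
  rw [Gm, SimpleGraph.fromRel_adj]
  exact ⟨by simp [Prod.ext_iff, hne], h⟩

lemma mem_compl_of_odd {i : ZMod m} (hp : i.val % 2 = 1) {j : Fin 6}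
    (hj : j = 1 ∨ j = 2 ∨ j = 4 ∨ j = 5) : (i, j) ∈ (gmCut m)ᶜ := by
  simp only [gmCut, Set.mem_compl_iff, Set.mem_setOf_eq]
  rcases hj with rfl | rfl | rfl | rfl <;> simp <;> omega

lemma mem_compl_of_even {i : ZMod m} (hp : i.val % 2 = 0) {j : Fin 6}
    (hj : j = 0 ∨ j = 3) : (i, j) ∈ (gmCut m)ᶜ := by
  simp only [gmCut, Set.mem_compl_iff, Set.mem_setOf_eq]
  rcases hj with rfl | rfl <;> simp <;> omega

lemma reach5 {i : ZMod m} (hp : i.val % 2 = 1) (j' : Fin 6)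
    (hj' : j' = 1 ∨ j' = 2 ∨ j' = 5) :
    ((Gm m).induce (gmCut m)ᶜ).Reachable
      ⟨(i, j'), mem_compl_of_odd hp (by tauto)⟩
      ⟨(i, 5), mem_compl_of_odd hp (by tauto)⟩ := by
  have h1 : (Gm m).Adj (i, 1) (i, 5) :=
    gm_adj i (by decide) (Or.inr (Or.inl ⟨rfl,
      Or.inr (Or.inr (Or.inr (Or.inr (Or.inr ⟨rfl, Or.inr (Or.inl rfl)⟩))))⟩))
  have h2 : (Gm m).Adj (i, 2) (i, 5) :=
    gm_adj i (by decide) (Or.inr (Or.inl ⟨rfl,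
      Or.inr (Or.inr (Or.inr (Or.inr (Or.inr ⟨rfl, Or.inr (Or.inr (Or.inl rfl))⟩))))⟩))
  rcases hj' with rfl | rfl | rfl
  · exact SimpleGraph.Adj.reachable h1
  · exact SimpleGraph.Adj.reachable h2
  · exact SimpleGraph.Reachable.refl _

lemma reach_of_fB_eq (hm2 : 2 ≤ m) (hme : Even m) (x y : ↥(gmCut m)ᶜ)
    (h : fB x.1 = fB y.1) : ((Gm m).induce (gmCut m)ᶜ).Reachable x y := by
  obtain ⟨⟨i, j⟩, hx⟩ := x
  obtain ⟨⟨i', k⟩, hy⟩ := y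
  simp only [fB, Prod.mk.injEq] at h
  obtain ⟨rfl, hb⟩ := h
  simp only [gmCut, Set.mem_compl_iff, Set.mem_setOf_eq] at hx hy
  rcases Nat.mod_two_eq_zero_or_one i.val with hp | hp
  · rw [hp] at hx hy
    have hjk : j = k := dec_even_b j k (dec_survive0 j hx) (dec_survive0 k hy) hb
    subst hjk
    exact SimpleGraph.Reachable.refl _
  · rw [hp] at hx hy
    rcases dec_odd_b j k (dec_survive1 j hx) (dec_survive1 k hy) hb with ⟨rfl, rfl⟩ | ⟨hj', hk'⟩
    · exact SimpleGraph.Reachable.refl _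
    · exact (reach5 hp j hj').trans (reach5 hp k hk').symm

end Main

private lemma dec_cut_flip1 : ∀ b : Fin 6, (b = 0 ∨ b = 3) →
    ¬((0:ℕ) = 1 ∧ (b = 0 ∨ b = 3) ∨ (0:ℕ) = 0 ∧ (b = 1 ∨ b = 2 ∨ b = 4 ∨ b = 5)) := by decide

private lemma dec_cut_flip0 : ∀ b : Fin 6, (b = 1 ∨ b = 2 ∨ b = 4 ∨ b = 5) →
    ¬((1:ℕ) = 1 ∧ (b = 0 ∨ b = 3) ∨ (1:ℕ) = 0 ∧ (b = 1 ∨ b = 2 ∨ b = 4 ∨ b = 5)) := by decide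

/-- for even `m ≥ 4`, the set `S = gmCut m` has `|S| = 3m` and
`G_m − S` has exactly `2m` components; consequently the toughness of `G_m`
is at most `3/2` (witnessed by `2 ≤ ω(G_m − S)` and `2|S| ≤ 3·ω(G_m − S)`). -/
theorem Gm_cutset_gives_toughness_at_most_three_halves (m : ℕ) (hm4 : 4 ≤ m) (hme : Even m) :
    (gmCut m).ncard = 3 * m ∧
    numComp (Gm m) (gmCut m) = 2 * m ∧
    (2 ≤ numComp (Gm m) (gmCut m) ∧
      2 * (gmCut m).ncard ≤ 3 * numComp (Gm m) (gmCut m)) := by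
  haveI : NeZero m := ⟨by omega⟩
  have hm2 : 2 ≤ m := by omega
  -- cardinality of the cut via the shift bijection
  have hinj : Function.Injective (fun x : ZMod m × Fin 6 => (x.1 + 1, x.2)) := by
    intro a b hab
    simp only [Prod.mk.injEq] at hab
    exact Prod.ext (by have := hab.1; exact add_right_cancel this) hab.2
  have himg : (fun x : ZMod m × Fin 6 => (x.1 + 1, x.2)) '' gmCut m = (gmCut m)ᶜ := by
    ext z
    obtain ⟨i, j⟩ := z
    constructor
    · rintro ⟨⟨a, b⟩, hab, heq⟩
      have hi : a + 1 = i := congrArg Prod.fst heq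
      have hj : b = j := congrArg Prod.snd heq
      subst hj; subst hi
      have hp := gm_val_add_one hm2 hme a
      simp only [gmCut, Set.mem_setOf_eq] at hab
      simp only [gmCut, Set.mem_compl_iff, Set.mem_setOf_eq]
      rcases hab with ⟨h1, h2⟩ | ⟨h1, h2⟩
      · have h0 : (a + 1).val % 2 = 0 := by omega
        rw [h0]; exact dec_cut_flip1 _ h2
      · have h0 : (a + 1).val % 2 = 1 := by omega
        rw [h0]; exact dec_cut_flip0 _ h2
    · intro h
      refine ⟨(i - 1, j), ?_, by simp⟩
      have hp : i.val % 2 = ((i - 1).val + 1) % 2 := by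
        conv_lhs => rw [← sub_add_cancel i 1]
        rw [gm_val_add_one hm2 hme]
      simp only [gmCut, Set.mem_compl_iff, Set.mem_setOf_eq] at h
      simp only [gmCut, Set.mem_setOf_eq]
      rcases Nat.mod_two_eq_zero_or_one (i - 1).val with hq | hq
      · have h1 : i.val % 2 = 1 := by omega
        rw [h1] at h
        exact Or.inr ⟨hq, dec_survive1 j h⟩
      · have h1 : i.val % 2 = 0 := by omega
        rw [h1] at h
        exact Or.inl ⟨hq, dec_survive0 j h⟩
  have h6 : Nat.card (ZMod m × Fin 6) = 6 * m := by
    rw [Nat.card_prod, Nat.card_zmod, Nat.card_eq_fintype_card, Fintype.card_fin]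
    ring
  have hsum := Set.ncard_add_ncard_compl (gmCut m)
  rw [← himg, Set.ncard_image_of_injective _ hinj, h6] at hsum
  have hcard : (gmCut m).ncard = 3 * m := by omega
  -- number of components via the explicit bijection
  have hcomp : numComp (Gm m) (gmCut m) = 2 * m := by
    set H := (Gm m).induce (gmCut m)ᶜ with hH
    have F : H.ConnectedComponent → ZMod m × Bool :=
      SimpleGraph.ConnectedComponent.lift (fun v => fB v.1)
        (fun v w p _ => fB_eq_of_reachable hm2 hme ⟨p⟩)
    have hFinj : Function.Injective
        (SimpleGraph.ConnectedComponent.lift (β := ZMod m × Bool) (fun v => fB v.1)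
          (fun v w p _ => fB_eq_of_reachable hm2 hme ⟨p⟩)) := by
      intro c d
      refine SimpleGraph.ConnectedComponent.ind₂ (fun v w hvw => ?_) c d
      exact SimpleGraph.ConnectedComponent.sound (reach_of_fB_eq hm2 hme v w hvw)
    have hFsurj : Function.Surjective
        (SimpleGraph.ConnectedComponent.lift (β := ZMod m × Bool) (fun v => fB v.1)
          (fun v w p _ => fB_eq_of_reachable hm2 hme ⟨p⟩)) := by
      rintro ⟨i, b⟩
      rcases Nat.mod_two_eq_zero_or_one i.val with hp | hp <;> cases b
      · exact ⟨H.connectedComponentMk ⟨(i, 0), mem_compl_of_even hp (Or.inl rfl)⟩, rfl⟩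
      · exact ⟨H.connectedComponentMk ⟨(i, 3), mem_compl_of_even hp (Or.inr rfl)⟩, rfl⟩
      · exact ⟨H.connectedComponentMk ⟨(i, 1), mem_compl_of_odd hp (Or.inl rfl)⟩, rfl⟩
      · exact ⟨H.connectedComponentMk ⟨(i, 4),
          mem_compl_of_odd hp (Or.inr (Or.inr (Or.inl rfl)))⟩, rfl⟩
    have : numComp (Gm m) (gmCut m) = Nat.card (ZMod m × Bool) :=
      Nat.card_congr (Equiv.ofBijective _ ⟨hFinj, hFsurj⟩)
    rw [this, Nat.card_prod, Nat.card_zmod, Nat.card_eq_fintype_card, Fintype.card_bool]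
    ring
  exact ⟨hcard, hcomp, by omega, by omega⟩
end

section
/- Let n and m be positive integers with 2n/3 < m < n and n ≥ 7, and let G(n,m) be the graph with vertex set {v_{i,j} : i ∈ {1,2}, 1 ≤ j ≤ n}, where for each i ∈ {1,2} the vertices v_{i,1}, …, v_{i,n} form a complete graph K_n, and additionally v_{1,j} is adjacent to v_{2,j} for each 1 ≤ j ≤ m (equivalently, G(n,m) is obtained from the Cartesian product K_n □ P_2 by deleting n − m of the edges joining the two copies of K_n). Then G(n,m) is a claw-free, minimally (m/2)-tough graph with minimum degree n − 1 and maximum degree n. -/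
open SimpleGraph

/-- `G` is `t`-tough: whenever deleting `S` leaves at least two components,
`|S| ≥ t · ω(G − S)`. -/
def Tough {V : Type*} (t : ℝ) (G : SimpleGraph V) : Prop :=
  ∀ S : Set V, 2 ≤ numComp G S → t * (numComp G S : ℝ) ≤ (S.ncard : ℝ)

/-- `G` is minimally `t`-tough: `G` is `t`-tough and deleting any edge destroys
`t`-toughness. -/
def MinTough {V : Type*} (t : ℝ) (G : SimpleGraph V) : Prop :=
  Tough t G ∧ ∀ e ∈ G.edgeSet, ¬ Tough t (G.deleteEdges {e})

/-- The degree of a vertex, as the cardinality of its neighbor set. -/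
noncomputable def ndeg {V : Type*} (G : SimpleGraph V) (v : V) : ℕ :=
  (G.neighborSet v).ncard

/-- `G` is claw-free: it has no induced `K_{1,3}`. -/
def ClawFree {V : Type*} (G : SimpleGraph V) : Prop :=
  ¬ ∃ v a b c : V, a ≠ b ∧ a ≠ c ∧ b ≠ c ∧ G.Adj v a ∧ G.Adj v b ∧ G.Adj v c ∧
      ¬ G.Adj a b ∧ ¬ G.Adj a c ∧ ¬ G.Adj b c

/-- The graph `G(n,m)`: two disjoint copies of `K_n` (indexed by the first
coordinate), with `v_{1,j}` joined to `v_{2,j}` for the first `m` values of `j`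
(paper indices `1,…,m` correspond to `j.val < m`). -/
def Gnm (n m : ℕ) : SimpleGraph (Fin 2 × Fin n) :=
  SimpleGraph.fromRel (fun x y =>
    (x.1 = y.1 ∧ x.2 ≠ y.2) ∨ (x.1 ≠ y.1 ∧ x.2 = y.2 ∧ x.2.val < m))


lemma gnm_adj {n m : ℕ} {x y : Fin 2 × Fin n} :
    (Gnm n m).Adj x y ↔
    (x.1 = y.1 ∧ x.2 ≠ y.2) ∨ (x.1 ≠ y.1 ∧ x.2 = y.2 ∧ x.2.val < m) := by
  unfold Gnm
  rw [SimpleGraph.fromRel_adj]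
  constructor
  · rintro ⟨hne, (h | h) | (h | h)⟩
    · exact Or.inl h
    · exact Or.inr h
    · exact Or.inl ⟨h.1.symm, fun h' => h.2 h'.symm⟩
    · exact Or.inr ⟨fun h' => h.1 h'.symm, h.2.1.symm, h.2.1 ▸ h.2.2⟩
  · rintro (h | h)
    · exact ⟨fun he => h.2 (by rw [he]), Or.inl (Or.inl h)⟩
    · exact ⟨fun he => h.1 (by rw [he]), Or.inl (Or.inr h)⟩

-- adjacency in induced deleted graph
lemma adj_ind {n m : ℕ} {E : Set (Sym2 (Fin 2 × Fin n))} {S : Set (Fin 2 × Fin n)}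
    {p q : ↥Sᶜ} :
    (((Gnm n m).deleteEdges E).induce Sᶜ).Adj p q ↔
      (Gnm n m).Adj p.val q.val ∧ s(p.val, q.val) ∉ E := by
  simp [SimpleGraph.induce, SimpleGraph.comap]

lemma reach_same {n m : ℕ} {E : Set (Sym2 (Fin 2 × Fin n))} {S : Set (Fin 2 × Fin n)}
    (p q : ↥Sᶜ) (hpq : p.val.1 = q.val.1)
    (hE : p.val ≠ q.val → s(p.val, q.val) ∉ E) :
    (((Gnm n m).deleteEdges E).induce Sᶜ).Reachable p q := by
  rcases eq_or_ne p q with rfl | hne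
  · rfl
  have hval : p.val ≠ q.val := fun h => hne (Subtype.ext h)
  have h2 : p.val.2 ≠ q.val.2 := fun h => hval (Prod.ext hpq h)
  exact SimpleGraph.Adj.reachable
    (adj_ind.mpr ⟨gnm_adj.mpr (Or.inl ⟨hpq, h2⟩), hE hval⟩)

lemma adj_cross {n m : ℕ} {E : Set (Sym2 (Fin 2 × Fin n))} {S : Set (Fin 2 × Fin n)}
    (p q : ↥Sᶜ) (h1 : p.val.1 ≠ q.val.1) (h2 : p.val.2 = q.val.2)
    (h3 : p.val.2.val < m) (hE : s(p.val, q.val) ∉ E) :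
    (((Gnm n m).deleteEdges E).induce Sᶜ).Adj p q :=
  adj_ind.mpr ⟨gnm_adj.mpr (Or.inr ⟨h1, h2, h3⟩), hE⟩

section CC
variable {V : Type*} {G : SimpleGraph V}

lemma reach_const {β : Type*} (f : V → β) (h1 : ∀ v w, G.Adj v w → f v = f w) :
    ∀ v w, G.Reachable v w → f v = f w := by
  intro v w h
  obtain ⟨p⟩ := h
  induction p with
  | nil => rfl
  | cons h p ih => exact (h1 _ _ h).trans ih

lemma card_cc_eq (k : ℕ) (f : V → Fin k)
    (h1 : ∀ v w, G.Adj v w → f v = f w)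
    (h2 : Function.Surjective f)
    (h3 : ∀ v w, f v = f w → G.Reachable v w) :
    Nat.card G.ConnectedComponent = k := by
  let F : G.ConnectedComponent → Fin k := Quot.lift f (reach_const f h1)
  have hb : Function.Bijective F := by
    constructor
    · refine ConnectedComponent.ind₂ (fun v w h => ?_)
      exact ConnectedComponent.sound (h3 v w h)
    · intro i
      obtain ⟨v, hv⟩ := h2 i
      exact ⟨G.connectedComponentMk v, hv⟩
  rw [Nat.card_eq_of_bijective F hb, Nat.card_eq_fintype_card, Fintype.card_fin]

lemma exists_not_reach [Finite V] (h : 2 ≤ Nat.card G.ConnectedComponent) :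
    ∃ v w, ¬ G.Reachable v w := by
  have hnt : Nontrivial G.ConnectedComponent :=
    Finite.one_lt_card_iff_nontrivial.mp (by omega)
  obtain ⟨c, d, hcd⟩ := hnt
  obtain ⟨v, hv⟩ := c.exists_rep
  obtain ⟨w, hw⟩ := d.exists_rep
  refine ⟨v, w, fun hr => hcd ?_⟩
  rw [← hv, ← hw]
  exact ConnectedComponent.sound hr

end CC

lemma fin2_ne {a b : Fin 2} (h : a ≠ b) : b = a + 1 := by revert a b; decide
lemma fin2_cases (a : Fin 2) : a = 0 ∨ a = 1 := by revert a; decide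

lemma gnm_tough (n m : ℕ) (hm : 0 < m) (h2 : m < n) :
    Tough ((m : ℝ) / 2) (Gnm n m) := by
  intro S hS
  have hrw : (Gnm n m) = (Gnm n m).deleteEdges ∅ := SimpleGraph.deleteEdges_empty.symm
  have hS' : 2 ≤ Nat.card ((Gnm n m).induce Sᶜ).ConnectedComponent := hS
  -- every cross pair meets S
  have Hcross : ∀ j : Fin n, j.val < m → ((0 : Fin 2), j) ∈ S ∨ ((1 : Fin 2), j) ∈ S := by
    by_contra h
    push_neg at h
    obtain ⟨j, hj, h0, h1⟩ := h
    obtain ⟨u, v, huv⟩ := exists_not_reach hS'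
    have hreach : ∀ p : ↥Sᶜ, ((Gnm n m).induce Sᶜ).Reachable p ⟨((0:Fin 2), j), h0⟩ := by
      intro p
      rw [hrw]
      rcases fin2_cases p.val.1 with hp | hp
      · exact reach_same p ⟨((0:Fin 2), j), h0⟩ hp (fun _ => Set.notMem_empty _)
      · refine (reach_same p ⟨((1:Fin 2), j), h1⟩ hp (fun _ => Set.notMem_empty _)).trans
          (SimpleGraph.Adj.reachable (adj_cross ⟨((1:Fin 2), j), h1⟩ ⟨((0:Fin 2), j), h0⟩ (show (1:Fin 2) ≠ (0:Fin 2) by decide) rfl hj (Set.notMem_empty _)))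
    exact huv ((hreach u).trans (hreach v).symm)
  -- both copies have a vertex outside S
  have hcopy : ∀ i : Fin 2, ∃ j, (i, j) ∉ S := by
    by_contra h
    push_neg at h
    obtain ⟨i, hi⟩ := h
    obtain ⟨u, v, huv⟩ := exists_not_reach hS'
    have hfst : ∀ p : ↥Sᶜ, p.val.1 = i + 1 := by
      intro p
      refine fin2_ne (fun hcontra => ?_)
      have := hi p.val.2
      rw [hcontra] at this
      exact p.property this
    refine huv ?_
    rw [hrw]
    exact reach_same u v ((hfst u).trans (hfst v).symm) (fun _ => Set.notMem_empty _)
  -- number of components is exactly 2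
  have hnc : numComp (Gnm n m) S = 2 := by
    refine card_cc_eq 2 (fun p => p.val.1) ?_ ?_ ?_
    · rintro ⟨⟨pi, pj⟩, hp⟩ ⟨⟨qi, qj⟩, hq⟩ hadj
      have hadj' : (Gnm n m).Adj (pi, pj) (qi, qj) := hadj
      rcases gnm_adj.mp hadj' with ⟨h, _⟩ | ⟨hne, heq, hlt⟩
      · exact h
      · exfalso
        simp only at heq hlt hne
        subst heq
        rcases Hcross pj hlt with hc | hc
        · rcases fin2_cases pi with rfl | rfl
          · exact hp hc
          · rcases fin2_cases qi with rfl | rfl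
            · exact hq hc
            · exact hne rfl
        · rcases fin2_cases pi with rfl | rfl
          · rcases fin2_cases qi with rfl | rfl
            · exact hne rfl
            · exact hq hc
          · exact hp hc
    · intro c
      obtain ⟨j, hj⟩ := hcopy c
      exact ⟨⟨(c, j), hj⟩, rfl⟩
    · intro p q hpq
      rw [hrw]
      exact reach_same p q hpq (fun _ => Set.notMem_empty _)
  -- |S| ≥ m
  have hcard : m ≤ S.ncard := by
    have hgm : ∀ k : Fin m, ∃ p ∈ S, p.2.val = k.val := by
      intro k
      have hk : ((⟨k.val, k.isLt.trans h2⟩ : Fin n)).val < m := k.isLt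
      rcases Hcross ⟨k.val, k.isLt.trans h2⟩ hk with h | h
      · exact ⟨_, h, rfl⟩
      · exact ⟨_, h, rfl⟩
    choose g hg1 hg2 using hgm
    have hinj : Function.Injective (fun k : Fin m => (⟨g k, hg1 k⟩ : ↥S)) := by
      intro k1 k2 h
      have h' : g k1 = g k2 := Subtype.ext_iff.mp h
      have : (g k1).2.val = (g k2).2.val := by rw [h']
      rw [hg2 k1, hg2 k2] at this
      exact Fin.ext this
    have := Nat.card_le_card_of_injective _ hinj
    simpa [Nat.card_eq_fintype_card, Nat.card_coe_set_eq] using this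
  rw [hnc]
  have : (m : ℝ) ≤ (S.ncard : ℝ) := Nat.cast_le.mpr hcard
  push_cast
  linarith

lemma fin2_add_ne (a : Fin 2) : a + 1 ≠ a := by revert a; decide

lemma prodmk_inj {n : ℕ} (i : Fin 2) : Function.Injective (fun l : Fin n => (i, l)) := by
  intro a b h
  simpa using h

lemma gnm_ndeg {n m : ℕ} (h2 : m < n) (v : Fin 2 × Fin n) :
    ndeg (Gnm n m) v = if v.2.val < m then n else n - 1 := by
  by_cases hv : v.2.val < m
  · have hset : (Gnm n m).neighborSet v =
        ↑(((Finset.univ.erase v.2).image (fun l => (v.1, l))) ∪ {(v.1 + 1, v.2)}) := by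
      ext w
      simp only [SimpleGraph.mem_neighborSet, gnm_adj, Finset.coe_union, Set.mem_union,
        Finset.coe_image, Set.mem_image, Finset.mem_coe, Finset.mem_erase, Finset.mem_univ,
        and_true, Finset.coe_singleton, Set.mem_singleton_iff]
      constructor
      · rintro (⟨ha, hb⟩ | ⟨ha, hb, _⟩)
        · exact Or.inl ⟨w.2, Ne.symm hb, Prod.ext ha rfl⟩
        · exact Or.inr (Prod.ext (fin2_ne ha) hb.symm)
      · rintro (⟨l, hl, rfl⟩ | rfl)
        · exact Or.inl ⟨rfl, fun h => hl h.symm⟩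
        · exact Or.inr ⟨(fin2_add_ne v.1).symm, rfl, hv⟩
    rw [ndeg, hset, Set.ncard_coe_finset, Finset.card_union_of_disjoint, if_pos hv]
    · rw [Finset.card_image_of_injective _ (prodmk_inj v.1),
        Finset.card_erase_of_mem (Finset.mem_univ _), Finset.card_univ, Fintype.card_fin,
        Finset.card_singleton]
      omega
    · rw [Finset.disjoint_left]
      rintro a ha hb
      simp only [Finset.mem_image, Finset.mem_erase] at ha
      simp only [Finset.mem_singleton] at hb
      obtain ⟨l, _, rfl⟩ := ha
      exact fin2_add_ne v.1 (congrArg Prod.fst hb).symm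
  · have hset : (Gnm n m).neighborSet v =
        ↑((Finset.univ.erase v.2).image (fun l => (v.1, l))) := by
      ext w
      simp only [SimpleGraph.mem_neighborSet, gnm_adj, Finset.coe_image, Set.mem_image,
        Finset.mem_coe, Finset.mem_erase, Finset.mem_univ, and_true]
      constructor
      · rintro (⟨ha, hb⟩ | ⟨ha, hb, hc⟩)
        · exact ⟨w.2, Ne.symm hb, Prod.ext ha rfl⟩
        · exact absurd hc hv
      · rintro ⟨l, hl, rfl⟩
        exact Or.inl ⟨rfl, fun h => hl h.symm⟩
    rw [ndeg, hset, Set.ncard_coe_finset, if_neg hv,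
      Finset.card_image_of_injective _ (prodmk_inj v.1),
      Finset.card_erase_of_mem (Finset.mem_univ _), Finset.card_univ, Fintype.card_fin]

lemma gnm_clawfree (n m : ℕ) : ClawFree (Gnm n m) := by
  rintro ⟨v, a, b, c, hab, hac, hbc, _, _, _, nab, nac, nbc⟩
  have key : ∀ p q : Fin 2 × Fin n, p ≠ q → p.1 = q.1 → (Gnm n m).Adj p q := by
    intro p q hne h
    exact gnm_adj.mpr (Or.inl ⟨h, fun h2 => hne (Prod.ext h h2)⟩)
  have tri : a.1 = b.1 ∨ a.1 = c.1 ∨ b.1 = c.1 := by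
    have : ∀ x y z : Fin 2, x = y ∨ x = z ∨ y = z := by decide
    exact this a.1 b.1 c.1
  rcases tri with h | h | h
  · exact nab (key a b hab h)
  · exact nac (key a c hac h)
  · exact nbc (key b c hbc h)

lemma mem_Tm {n m : ℕ} (h : m ≤ n) (l : Fin n) :
    l ∈ Finset.univ.image (Fin.castLE h) ↔ l.val < m := by
  simp only [Finset.mem_image, Finset.mem_univ, true_and]
  constructor
  · rintro ⟨k, rfl⟩
    exact k.isLt
  · intro hl
    exact ⟨⟨l.val, hl⟩, Fin.ext rfl⟩

lemma fin2_resolve {a b c : Fin 2} (h : a ≠ b) (h2 : c ≠ a) : c = b := by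
  revert a b c; decide

lemma gnm_cross_not_tough (n m : ℕ) (hm : 0 < m) (h2 : m < n) (x y : Fin 2 × Fin n)
    (hxy : x.1 ≠ y.1) (hx2 : x.2 = y.2) (hxm : x.2.val < m) :
    ¬ Tough ((m : ℝ) / 2) ((Gnm n m).deleteEdges {s(x, y)}) := by
  intro htough
  set E : Set (Sym2 (Fin 2 × Fin n)) := {s(x, y)} with hE
  set Sf : Finset (Fin 2 × Fin n) :=
    ((Finset.univ.image (Fin.castLE h2.le)).erase x.2).image (fun l => (x.1, l)) with hSf
  have hmemS : ∀ p : Fin 2 × Fin n, p ∈ Sf ↔ (p.1 = x.1 ∧ p.2.val < m ∧ p.2 ≠ x.2) := by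
    intro p
    simp only [hSf, Finset.mem_image, Finset.mem_erase, mem_Tm h2.le]
    constructor
    · rintro ⟨l, ⟨hl1, hl2⟩, rfl⟩
      exact ⟨rfl, hl2, hl1⟩
    · rintro ⟨ha, hb, hc⟩
      exact ⟨p.2, ⟨hc, hb⟩, Prod.ext ha.symm rfl⟩
  -- vertices outside S with first coordinate x.1 and second coordinate < m equal x;
  have houtx : ∀ p : ↥(↑Sf : Set (Fin 2 × Fin n))ᶜ,
      p.val.1 = x.1 → p.val.2.val < m → p.val = x := by
    intro p hp hlt
    have hpS := p.property
    simp only [Set.mem_compl_iff, Finset.mem_coe, hmemS, not_and, not_not] at hpS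
    exact Prod.ext hp (hpS hp hlt)
  have hxout : x ∉ (↑Sf : Set (Fin 2 × Fin n)) := by
    simp only [Finset.mem_coe, hmemS]
    tauto
  have hyout : y ∉ (↑Sf : Set (Fin 2 × Fin n)) := by
    simp only [Finset.mem_coe, hmemS]
    exact fun h => hxy h.1.symm
  have hEsafe : ∀ p q : ↥(↑Sf : Set (Fin 2 × Fin n))ᶜ, p.val.1 = q.val.1 →
      s(p.val, q.val) ∉ E := by
    intro p q hsame hmem
    rw [hE, Set.mem_singleton_iff, Sym2.eq_iff] at hmem
    rcases hmem with ⟨ha, hb⟩ | ⟨ha, hb⟩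
    · exact hxy (by rw [← ha, ← hb, hsame])
    · exact hxy (by rw [← ha, ← hb, hsame])
  have hnc : numComp ((Gnm n m).deleteEdges E) ↑Sf = 2 := by
    refine card_cc_eq 2 (fun p => if p.val.1 = x.1 then 0 else 1) ?_ ?_ ?_
    · intro p q hadj
      obtain ⟨hadj2, hEm⟩ := adj_ind.mp hadj
      by_cases hp : p.val.1 = x.1 <;> by_cases hq : q.val.1 = x.1
      · simp only [if_pos hp, if_pos hq]
      · exfalso
        rcases gnm_adj.mp hadj2 with ⟨hs, _⟩ | ⟨_, heq, hlt⟩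
        · exact hq (hs ▸ hp)
        · have hpv : p.val = x := houtx p hp hlt
          have hqv : q.val = y := by
            refine Prod.ext (fin2_resolve hxy hq) ?_
            rw [← heq, show p.val.2 = x.2 from congrArg Prod.snd hpv, hx2]
          exact hEm (by rw [hpv, hqv, hE]; rfl)
      · exfalso
        rcases gnm_adj.mp hadj2 with ⟨hs, _⟩ | ⟨_, heq, hlt⟩
        · exact hp (hs.symm ▸ hq)
        · have hqv : q.val = x := houtx q hq (heq ▸ hlt)
          have hpv : p.val = y := by
            refine Prod.ext (fin2_resolve hxy hp) ?_
            rw [heq, show q.val.2 = x.2 from congrArg Prod.snd hqv, hx2]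
          refine hEm ?_
          rw [hpv, hqv, hE, Set.mem_singleton_iff]
          exact Sym2.eq_swap
      · simp only [if_neg hp, if_neg hq]
    · intro c
      rcases fin2_cases c with rfl | rfl
      · exact ⟨⟨x, hxout⟩, if_pos rfl⟩
      · exact ⟨⟨y, hyout⟩, if_neg (fun h => hxy h.symm)⟩
    · intro p q hpq
      by_cases hp : p.val.1 = x.1 <;> by_cases hq : q.val.1 = x.1
      · exact reach_same p q (hp.trans hq.symm) (fun _ => hEsafe p q (hp.trans hq.symm))
      · simp only [if_pos hp, if_neg hq] at hpq
        exact absurd hpq (by decide)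
      · simp only [if_neg hp, if_pos hq] at hpq
        exact absurd hpq (by decide)
      · have hco : p.val.1 = q.val.1 := (fin2_resolve hxy hp).trans (fin2_resolve hxy hq).symm
        exact reach_same p q hco (fun _ => hEsafe p q hco)
  have hcard : (↑Sf : Set (Fin 2 × Fin n)).ncard = m - 1 := by
    rw [Set.ncard_coe_finset, hSf, Finset.card_image_of_injective _ (prodmk_inj x.1),
      Finset.card_erase_of_mem ((mem_Tm h2.le x.2).mpr hxm),
      Finset.card_image_of_injective _ (Fin.castLE_injective h2.le), Finset.card_univ,
      Fintype.card_fin]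
  have hineq := htough ↑Sf (by rw [hnc])
  rw [hnc, hcard] at hineq
  have hc1 : ((m - 1 : ℕ) : ℝ) = (m : ℝ) - 1 := by
    push_cast [Nat.cast_sub hm]
    ring
  rw [hc1] at hineq
  norm_num at hineq

lemma exists_third {n : ℕ} (hn : 3 ≤ n) (a b : Fin n) : ∃ l : Fin n, l ≠ a ∧ l ≠ b := by
  by_contra h
  push_neg at h
  have hsub : (Finset.univ : Finset (Fin n)) ⊆ {a, b} := by
    intro l _
    simp only [Finset.mem_insert, Finset.mem_singleton]
    rcases eq_or_ne l a with h' | h'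
    · exact Or.inl h'
    · exact Or.inr (h l h')
  have hc1 := Finset.card_le_card hsub
  have hc2 : ({a, b} : Finset (Fin n)).card ≤ 2 :=
    (Finset.card_insert_le _ _).trans (by simp)
  simp only [Finset.card_univ, Fintype.card_fin] at hc1
  omega

lemma fin3_cases (a : Fin 3) : a = 0 ∨ a = 1 ∨ a = 2 := by revert a; decide

lemma gnm_inside_not_tough (n m : ℕ) (h1 : 2 * n < 3 * m) (h2 : m < n) (hn : 7 ≤ n)
    (x y : Fin 2 × Fin n) (hxy1 : x.1 = y.1) (hxy2 : x.2 ≠ y.2) :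
    ¬ Tough ((m : ℝ) / 2) ((Gnm n m).deleteEdges {s(x, y)}) := by
  intro htough
  set E : Set (Sym2 (Fin 2 × Fin n)) := {s(x, y)} with hE
  set Sf : Finset (Fin 2 × Fin n) :=
    (((Finset.univ.erase x.2).erase y.2).image (fun l => (x.1, l))) ∪
      {(x.1 + 1, x.2), (x.1 + 1, y.2)} with hSf
  have hmemS : ∀ p : Fin 2 × Fin n,
      p ∈ Sf ↔ (p.1 = x.1 ∧ p.2 ≠ x.2 ∧ p.2 ≠ y.2) ∨ p = (x.1 + 1, x.2) ∨
        p = (x.1 + 1, y.2) := by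
    intro p
    simp only [hSf, Finset.mem_union, Finset.mem_image, Finset.mem_erase, Finset.mem_univ,
      and_true, Finset.mem_insert, Finset.mem_singleton]
    constructor
    · rintro (⟨l, ⟨hl1, hl2⟩, rfl⟩ | h | h)
      · exact Or.inl ⟨rfl, hl2, hl1⟩
      · exact Or.inr (Or.inl h)
      · exact Or.inr (Or.inr h)
    · rintro (⟨ha, hb, hc⟩ | h | h)
      · exact Or.inl ⟨p.2, ⟨hc, hb⟩, Prod.ext ha.symm rfl⟩
      · exact Or.inr (Or.inl h)
      · exact Or.inr (Or.inr h)
  -- structure of vertices outside S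
  have hout1 : ∀ p : ↥(↑Sf : Set (Fin 2 × Fin n))ᶜ, p.val.1 = x.1 →
      p.val.2 = x.2 ∨ p.val.2 = y.2 := by
    intro p hp
    have hpS := p.property
    simp only [Set.mem_compl_iff, Finset.mem_coe, hmemS, not_or, not_and] at hpS
    by_contra hcon
    push_neg at hcon
    exact (hpS.1 hp hcon.1) hcon.2
  have hout2 : ∀ p : ↥(↑Sf : Set (Fin 2 × Fin n))ᶜ, p.val.1 ≠ x.1 →
      p.val.2 ≠ x.2 ∧ p.val.2 ≠ y.2 := by
    intro p hp
    have hp1 : p.val.1 = x.1 + 1 := fin2_ne (Ne.symm hp)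
    have hpS := p.property
    simp only [Set.mem_compl_iff, Finset.mem_coe, hmemS, not_or, not_and] at hpS
    constructor
    · exact fun h => hpS.2.1 (Prod.ext hp1 h)
    · exact fun h => hpS.2.2 (Prod.ext hp1 h)
  have hxout : x ∉ (↑Sf : Set (Fin 2 × Fin n)) := by
    simp only [Finset.mem_coe, hmemS, not_or]
    refine ⟨fun h => h.2.1 rfl, fun h => ?_, fun h => ?_⟩
    · exact fin2_add_ne x.1 (congrArg Prod.fst h).symm
    · exact fin2_add_ne x.1 (congrArg Prod.fst h).symm
  have hyout : y ∉ (↑Sf : Set (Fin 2 × Fin n)) := by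
    simp only [Finset.mem_coe, hmemS, not_or]
    refine ⟨fun h => h.2.2 rfl, fun h => ?_, fun h => ?_⟩
    · exact fin2_add_ne x.1 (hxy1.trans (congrArg Prod.fst h)).symm
    · exact fin2_add_ne x.1 (hxy1.trans (congrArg Prod.fst h)).symm
  have hEsafe : ∀ p q : ↥(↑Sf : Set (Fin 2 × Fin n))ᶜ, p.val.1 ≠ x.1 →
      s(p.val, q.val) ∉ E := by
    intro p q hp hmem
    rw [hE, Set.mem_singleton_iff, Sym2.eq_iff] at hmem
    rcases hmem with ⟨ha, _⟩ | ⟨ha, _⟩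
    · exact hp (by rw [ha])
    · exact hp (by rw [ha, ← hxy1])
  have hnc : numComp ((Gnm n m).deleteEdges E) ↑Sf = 3 := by
    refine card_cc_eq 3
      (fun p => if p.val.1 = x.1 then (if p.val.2 = x.2 then 0 else 1) else 2) ?_ ?_ ?_
    · intro p q hadj
      obtain ⟨hadj2, hEm⟩ := adj_ind.mp hadj
      rcases gnm_adj.mp hadj2 with ⟨hs, hne2⟩ | ⟨hneq, heq, _⟩
      · -- same copy
        by_cases hp : p.val.1 = x.1
        · exfalso
          have hq : q.val.1 = x.1 := hs ▸ hp
          rcases hout1 p hp with hp2 | hp2 <;> rcases hout1 q hq with hq2 | hq2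
          · exact hne2 (hp2.trans hq2.symm)
          · exact hEm (by
              rw [show p.val = x from Prod.ext hp hp2,
                show q.val = y from Prod.ext (hq.trans hxy1) hq2, hE]
              rfl)
          · refine hEm ?_
            rw [show p.val = y from Prod.ext (hp.trans hxy1) hp2,
              show q.val = x from Prod.ext hq hq2, hE, Set.mem_singleton_iff]
            exact Sym2.eq_swap
          · exact hne2 (hp2.trans hq2.symm)
        · have hq : ¬ q.val.1 = x.1 := fun h => hp (hs.symm ▸ h)
          simp only [if_neg hp, if_neg hq]
      · -- cross edge
        exfalso
        by_cases hp : p.val.1 = x.1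
        · have hq : q.val.1 ≠ x.1 := fun h => hneq (hp.trans h.symm)
          rcases hout1 p hp with hp2 | hp2
          · exact (hout2 q hq).1 (heq ▸ hp2)
          · exact (hout2 q hq).2 (heq ▸ hp2)
        · by_cases hq : q.val.1 = x.1
          · rcases hout1 q hq with hq2 | hq2
            · exact (hout2 p hp).1 (heq.symm ▸ hq2)
            · exact (hout2 p hp).2 (heq.symm ▸ hq2)
          · exact hneq ((fin2_ne (Ne.symm hp)).trans (fin2_ne (Ne.symm hq)).symm)
    · intro c
      rcases fin3_cases c with rfl | rfl | rfl
      · exact ⟨⟨x, hxout⟩, by simp⟩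
      · refine ⟨⟨y, hyout⟩, ?_⟩
        simp only [if_pos hxy1.symm, if_neg (fun h : y.2 = x.2 => hxy2 h.symm)]
      · obtain ⟨l, hlx, hly⟩ := exists_third (by omega) x.2 y.2
        have hmem : ((x.1 + 1, l) : Fin 2 × Fin n) ∉ (↑Sf : Set (Fin 2 × Fin n)) := by
          simp only [Finset.mem_coe, hmemS, not_or, not_and]
          refine ⟨fun h => absurd h (fin2_add_ne x.1), fun h => ?_, fun h => ?_⟩
          · exact hlx (congrArg Prod.snd h)
          · exact hly (congrArg Prod.snd h)
        exact ⟨⟨(x.1 + 1, l), hmem⟩, if_neg (fin2_add_ne x.1)⟩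
    · intro p q hpq
      by_cases hp : p.val.1 = x.1 <;> by_cases hq : q.val.1 = x.1
      · by_cases hp2 : p.val.2 = x.2 <;> by_cases hq2 : q.val.2 = x.2
        · have : p = q := Subtype.ext (Prod.ext (hp.trans hq.symm) (hp2.trans hq2.symm))
          rw [this]
        · simp only [if_pos hp, if_pos hq, if_pos hp2, if_neg hq2] at hpq
          exact absurd hpq (by decide)
        · simp only [if_pos hp, if_pos hq, if_neg hp2, if_pos hq2] at hpq
          exact absurd hpq (by decide)
        · have hp3 : p.val.2 = y.2 := (hout1 p hp).resolve_left hp2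
          have hq3 : q.val.2 = y.2 := (hout1 q hq).resolve_left hq2
          have : p = q := Subtype.ext (Prod.ext (hp.trans hq.symm) (hp3.trans hq3.symm))
          rw [this]
      · exfalso
        simp only [if_pos hp, if_neg hq] at hpq
        by_cases hp2 : p.val.2 = x.2 <;> simp only [if_pos, if_neg, hp2, if_true,
          if_false] at hpq <;> exact absurd hpq (by decide)
      · exfalso
        simp only [if_neg hp, if_pos hq] at hpq
        by_cases hq2 : q.val.2 = x.2 <;> simp only [if_pos, if_neg, hq2, if_true,
          if_false] at hpq <;> exact absurd hpq (by decide)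
      · exact reach_same p q ((fin2_ne (Ne.symm hp)).trans (fin2_ne (Ne.symm hq)).symm)
          (fun _ => hEsafe p q hp)
  have hcard : (↑Sf : Set (Fin 2 × Fin n)).ncard = n := by
    rw [Set.ncard_coe_finset, hSf, Finset.card_union_of_disjoint]
    · rw [Finset.card_image_of_injective _ (prodmk_inj x.1),
        Finset.card_erase_of_mem (Finset.mem_erase.mpr ⟨fun h => hxy2 h.symm,
          Finset.mem_univ _⟩),
        Finset.card_erase_of_mem (Finset.mem_univ _), Finset.card_univ, Fintype.card_fin,
        Finset.card_insert_of_notMem (by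
          simp only [Finset.mem_singleton]
          exact fun h => hxy2 (Prod.ext_iff.mp h).2), Finset.card_singleton]
      omega
    · rw [Finset.disjoint_left]
      rintro a ha hb
      simp only [Finset.mem_image, Finset.mem_erase] at ha
      simp only [Finset.mem_insert, Finset.mem_singleton] at hb
      obtain ⟨l, _, rfl⟩ := ha
      rcases hb with h | h
      · exact fin2_add_ne x.1 (congrArg Prod.fst h).symm
      · exact fin2_add_ne x.1 (congrArg Prod.fst h).symm
  have hineq := htough ↑Sf (by rw [hnc]; omega)
  rw [hnc, hcard] at hineq
  have hcast : (2 : ℝ) * n < 3 * m := by exact_mod_cast h1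
  norm_num at hineq
  linarith


/-- for positive integers `n, m` with `2n/3 < m < n` and `n ≥ 7`,
the graph `G(n,m)` is a claw-free, minimally `m/2`-tough graph with minimum
degree `n − 1` and maximum degree `n`. -/
theorem Gnm_clawfree_minimally_half_m_tough (n m : ℕ) (hm : 0 < m)
    (h1 : 2 * n < 3 * m) (h2 : m < n) (hn : 7 ≤ n) :
    ClawFree (Gnm n m) ∧
    MinTough ((m : ℝ) / 2) (Gnm n m) ∧
    ((∀ v, n - 1 ≤ ndeg (Gnm n m) v) ∧ (∃ v, ndeg (Gnm n m) v = n - 1)) ∧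
    ((∀ v, ndeg (Gnm n m) v ≤ n) ∧ (∃ v, ndeg (Gnm n m) v = n)) := by
  refine ⟨gnm_clawfree n m, ⟨gnm_tough n m hm h2, ?_⟩, ⟨?_, ?_⟩, ?_, ?_⟩
  · intro e he
    induction e using Sym2.ind with
    | _ x y =>
      have hadj : (Gnm n m).Adj x y := (SimpleGraph.mem_edgeSet _).mp he
      rcases gnm_adj.mp hadj with ⟨ha, hb⟩ | ⟨ha, hb, hc⟩
      · exact gnm_inside_not_tough n m h1 h2 hn x y ha hb
      · exact gnm_cross_not_tough n m hm h2 x y ha hb hc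
  · intro v
    rw [gnm_ndeg h2]
    split_ifs <;> omega
  · refine ⟨((0 : Fin 2), ⟨m, h2⟩), ?_⟩
    rw [gnm_ndeg h2, if_neg (lt_irrefl m)]
  · intro v
    rw [gnm_ndeg h2]
    split_ifs <;> omega
  · refine ⟨((0 : Fin 2), ⟨0, by omega⟩), ?_⟩
    rw [gnm_ndeg h2, if_pos hm]
end

section
/- Let n and m be positive integers with 1 ≤ m < n and n ≥ 3, and let G(n,m) be the graph with vertex set {v_{i,j} : i ∈ {1,2}, 1 ≤ j ≤ n}, where for each i ∈ {1,2} the vertices v_{i,1}, …, v_{i,n} form a complete graph K_n, and additionally v_{1,j} is adjacent to v_{2,j} for each 1 ≤ j ≤ m. Then the toughness of G(n,m) equals m/2; that is, every vertex set S with ω(G(n,m) − S) ≥ 2 satisfies 2|S| ≥ m·ω(G(n,m) − S), and the set S = {v_{1,1}, …, v_{1,m}} satisfies |S| = m and ω(G(n,m) − S) = 2. -/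
open SimpleGraph

lemma Gnm_adj_same {n m : ℕ} {i : Fin 2} {a b : Fin n} (h : a ≠ b) :
    (Gnm n m).Adj (i, a) (i, b) := by
  rw [Gnm, SimpleGraph.fromRel_adj]
  exact ⟨by simp [Prod.ext_iff, h], Or.inl (Or.inl ⟨rfl, h⟩)⟩

lemma Gnm_adj_cross {n m : ℕ} {i k : Fin 2} {a : Fin n} (h : i ≠ k) (ha : a.val < m) :
    (Gnm n m).Adj (i, a) (k, a) := by
  rw [Gnm, SimpleGraph.fromRel_adj]
  exact ⟨by simp [Prod.ext_iff, h], Or.inl (Or.inr ⟨h, rfl, ha⟩)⟩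

/-- Two surviving vertices in the same copy are reachable. -/
lemma same_copy_reachable {n m : ℕ} (S : Set (Fin 2 × Fin n))
    (u v : ↥Sᶜ) (h : u.val.1 = v.val.1) :
    ((Gnm n m).induce Sᶜ).Reachable u v := by
  by_cases hv : u = v
  · exact hv ▸ Reachable.refl u
  · apply SimpleGraph.Adj.reachable
    have h2 : u.val.2 ≠ v.val.2 := by
      intro h2
      exact hv (Subtype.ext (Prod.ext h h2))
    show (Gnm n m).Adj u.val v.val
    obtain ⟨⟨i, a⟩, _⟩ := u
    obtain ⟨⟨j, b⟩, _⟩ := v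
    simp only at h h2
    subst h
    exact Gnm_adj_same h2

/-- Same-copy surviving vertices have the same connected component. -/
lemma same_copy_component {n m : ℕ} (S : Set (Fin 2 × Fin n))
    (u v : ↥Sᶜ) (h : u.val.1 = v.val.1) :
    ((Gnm n m).induce Sᶜ).connectedComponentMk u
      = ((Gnm n m).induce Sᶜ).connectedComponentMk v :=
  SimpleGraph.ConnectedComponent.sound (same_copy_reachable S u v h)

lemma fin2_eq_one {i : Fin 2} (h : i ≠ 0) : i = 1 := by
  fin_cases i <;> simp_all

lemma fin2_zero_or {i k : Fin 2} (h : i ≠ k) : i = 0 ∨ k = 0 := by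
  fin_cases i <;> fin_cases k <;> simp_all

/-- for `1 ≤ m < n` and `n ≥ 3`, the toughness of `G(n,m)` equals
`m/2`: every vertex set `S` with `ω(G(n,m) − S) ≥ 2` satisfies
`2|S| ≥ m·ω(G(n,m) − S)`, and the set `S = {v_{1,1}, …, v_{1,m}}` satisfies
`|S| = m` and `ω(G(n,m) − S) = 2`. -/
theorem Gnm_toughness_eq_half_m (n m : ℕ) (hm : 1 ≤ m) (h2 : m < n) (hn : 3 ≤ n) :
    (∀ S : Set (Fin 2 × Fin n), 2 ≤ numComp (Gnm n m) S →
      m * numComp (Gnm n m) S ≤ 2 * S.ncard) ∧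
    ({x : Fin 2 × Fin n | x.1 = 0 ∧ x.2.val < m}).ncard = m ∧
    numComp (Gnm n m) {x : Fin 2 × Fin n | x.1 = 0 ∧ x.2.val < m} = 2 := by
  classical
  refine ⟨?_, ?_, ?_⟩
  · -- general bound
    intro S hS
    unfold numComp at hS ⊢
    have hne : Nonempty ((Gnm n m).induce Sᶜ).ConnectedComponent :=
      (Nat.card_pos_iff.mp (by omega)).1
    obtain ⟨c0⟩ := hne
    -- numComp ≤ 2
    have hle2 : Nat.card ((Gnm n m).induce Sᶜ).ConnectedComponent ≤ 2 := by
      have hsurj : Function.Surjective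
          (fun i : Fin 2 => if h : ∃ u : ↥Sᶜ, u.val.1 = i then
            ((Gnm n m).induce Sᶜ).connectedComponentMk h.choose else c0) := by
        intro c
        induction c using SimpleGraph.ConnectedComponent.ind with
        | _ u =>
          refine ⟨u.val.1, ?_⟩
          simp only
          rw [dif_pos ⟨u, rfl⟩]
          exact same_copy_component S _ u
            (Exists.choose_spec (⟨u, rfl⟩ : ∃ v : ↥Sᶜ, v.val.1 = u.val.1))
      calc Nat.card ((Gnm n m).induce Sᶜ).ConnectedComponent
          ≤ Nat.card (Fin 2) := Nat.card_le_card_of_surjective _ hsurj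
        _ = 2 := by simp
    have hω : Nat.card ((Gnm n m).induce Sᶜ).ConnectedComponent = 2 :=
      le_antisymm hle2 hS
    -- for each j < m, one endpoint of the cross edge lies in S
    have hmem : ∀ j : Fin n, j.val < m → (0, j) ∈ S ∨ (1, j) ∈ S := by
      intro j hj
      by_contra hcon
      push_neg at hcon
      obtain ⟨h0, h1⟩ := hcon
      have key : ∀ c : ((Gnm n m).induce Sᶜ).ConnectedComponent,
          c = ((Gnm n m).induce Sᶜ).connectedComponentMk ⟨(0, j), h0⟩ := by
        intro c
        induction c using SimpleGraph.ConnectedComponent.ind with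
        | _ u =>
          by_cases hu : u.val.1 = 0
          · exact same_copy_component S u ⟨(0, j), h0⟩ hu
          · have hu1 : u.val.1 = 1 := fin2_eq_one hu
            calc ((Gnm n m).induce Sᶜ).connectedComponentMk u
                = ((Gnm n m).induce Sᶜ).connectedComponentMk ⟨(1, j), h1⟩ :=
                  same_copy_component S u ⟨(1, j), h1⟩ hu1
              _ = ((Gnm n m).induce Sᶜ).connectedComponentMk ⟨(0, j), h0⟩ :=
                  SimpleGraph.ConnectedComponent.sound
                    (SimpleGraph.Adj.reachable
                      (show (Gnm n m).Adj (1, j) (0, j) from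
                        Gnm_adj_cross (by decide) hj))
      have hsub : Subsingleton ((Gnm n m).induce Sᶜ).ConnectedComponent :=
        ⟨fun a b => (key a).trans (key b).symm⟩
      have : Nat.card ((Gnm n m).induce Sᶜ).ConnectedComponent = 1 :=
        Nat.card_eq_one_iff_unique.mpr ⟨hsub, ⟨c0⟩⟩
      omega
    -- injection Fin m → S
    have hcard : m ≤ S.ncard := by
      have hf : ∀ j : Fin m, (if (0, Fin.castLE h2.le j) ∈ S then
          ((0, Fin.castLE h2.le j) : Fin 2 × Fin n) else (1, Fin.castLE h2.le j)) ∈ S := by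
        intro j
        split_ifs with h
        · exact h
        · rcases hmem (Fin.castLE h2.le j) (by simp) with h' | h'
          · exact absurd h' h
          · exact h'
      set f : Fin m → ↥S := fun j => ⟨_, hf j⟩ with hfdef
      have hsnd : ∀ j, (f j).val.2 = Fin.castLE h2.le j := by
        intro j
        simp only [hfdef]
        split_ifs <;> rfl
      have hinj : Function.Injective f := by
        intro a b hab
        have : (f a).val.2 = (f b).val.2 := by rw [hab]
        rw [hsnd, hsnd] at this
        exact Fin.castLE_injective _ this
      calc m = Nat.card (Fin m) := by simp
        _ ≤ Nat.card ↥S := Nat.card_le_card_of_injective f hinj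
        _ = S.ncard := Nat.card_coe_set_eq S
    rw [hω]
    omega
  · -- ncard of S₀ equals m
    have e : {x : Fin 2 × Fin n | x.1 = 0 ∧ x.2.val < m} ≃ Fin m :=
      { toFun := fun x => ⟨x.val.2.val, x.prop.2⟩
        invFun := fun j => ⟨(0, Fin.castLE h2.le j), ⟨rfl, by simp⟩⟩
        left_inv := by
          rintro ⟨⟨i, a⟩, hi, ha⟩
          simp only at hi ha ⊢
          subst hi
          rfl
        right_inv := fun j => rfl }
    rw [← Nat.card_coe_set_eq, Nat.card_congr e, Nat.card_eq_fintype_card,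
      Fintype.card_fin]
  · -- numComp of S₀ equals 2
    unfold numComp
    set S0 : Set (Fin 2 × Fin n) := {x | x.1 = 0 ∧ x.2.val < m} with hS0
    -- reachability preserves the first coordinate
    have hstep : ∀ u v : ↥S0ᶜ, ((Gnm n m).induce S0ᶜ).Adj u v → u.val.1 = v.val.1 := by
      intro u v huv
      by_contra hne
      have hadj : (Gnm n m).Adj u.val v.val := huv
      rw [Gnm, SimpleGraph.fromRel_adj] at hadj
      obtain ⟨-, hrel⟩ := hadj
      have hcross : u.val.2 = v.val.2 ∧ u.val.2.val < m := by
        rcases hrel with (⟨h, _⟩ | ⟨_, h, hlt⟩) | (⟨h, _⟩ | ⟨_, h, hlt⟩)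
        · exact absurd h hne
        · exact ⟨h, hlt⟩
        · exact absurd h.symm hne
        · exact ⟨h.symm, h ▸ hlt⟩
      have h0 : u.val.1 = 0 ∨ v.val.1 = 0 := fin2_zero_or hne
      rcases h0 with h0 | h0
      · exact u.prop ⟨h0, hcross.2⟩
      · exact v.prop ⟨h0, hcross.1 ▸ hcross.2⟩
    have hreach : ∀ u v : ↥S0ᶜ, ((Gnm n m).induce S0ᶜ).Reachable u v →
        u.val.1 = v.val.1 := by
      intro u v h
      obtain ⟨p⟩ := h
      induction p with
      | nil => rfl
      | cons h p ih => exact (hstep _ _ h).trans ih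
    have hu0mem : ((0 : Fin 2), (⟨m, h2⟩ : Fin n)) ∈ S0ᶜ := by
      intro h
      exact absurd h.2 (by simp)
    have hu1mem : ((1 : Fin 2), (⟨0, by omega⟩ : Fin n)) ∈ S0ᶜ := by
      intro h
      exact absurd h.1 one_ne_zero
    set u0 : ↥S0ᶜ := ⟨_, hu0mem⟩
    set u1 : ↥S0ᶜ := ⟨_, hu1mem⟩
    rw [Nat.card_eq_two_iff]
    refine ⟨((Gnm n m).induce S0ᶜ).connectedComponentMk u0,
      ((Gnm n m).induce S0ᶜ).connectedComponentMk u1, ?_, ?_⟩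
    · intro h
      have := hreach u0 u1 (SimpleGraph.ConnectedComponent.exact h)
      simp [u0, u1] at this
    · apply Set.eq_univ_of_forall
      intro c
      induction c using SimpleGraph.ConnectedComponent.ind with
      | _ u =>
        by_cases hu : u.val.1 = 0
        · exact Or.inl (same_copy_component S0 u u0 hu)
        · have hu1 : u.val.1 = 1 := fin2_eq_one hu
          exact Or.inr (same_copy_component S0 u u1 hu1)
end

section
/- Let n and m be positive integers with 2n/3 < m < n and n ≥ 7, and let G(n,m) be the graph with vertex set {v_{i,j} : i ∈ {1,2}, 1 ≤ j ≤ n}, where for each i ∈ {1,2} the vertices v_{i,1}, …, v_{i,n} form a complete graph K_n, and additionally v_{1,j} is adjacent to v_{2,j} for each 1 ≤ j ≤ m. Then for every edge e of G(n,m) there exists a vertex set S with ω((G(n,m) − e) − S) ≥ 2 and 2|S| < m·ω((G(n,m) − e) − S); that is, G(n,m) − e is not (m/2)-tough for any edge e. -/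
open SimpleGraph

lemma reach_eq_of_isolated {V : Type*} {H : SimpleGraph V} {v w : V}
    (hiso : ∀ u, ¬ H.Adj v u) (h : H.Reachable v w) : v = w := by
  obtain ⟨p⟩ := h
  cases p with
  | nil => rfl
  | cons h _ => exact absurd h (hiso _)

lemma reach_invariant {V : Type*} {H : SimpleGraph V} {P : V → Prop}
    (hP : ∀ u w, H.Adj u w → P u → P w) {v w : V} (h : H.Reachable v w) (hv : P v) : P w := by
  obtain ⟨p⟩ := h
  induction p with
  | nil => exact hv
  | cons h p ih => exact ih (hP _ _ h hv)

lemma three_le_card {α : Type*} [Finite α] {a b c : α} (hab : a ≠ b) (hac : a ≠ c)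
    (hbc : b ≠ c) : 3 ≤ Nat.card α := by
  have := Nat.card_le_card_of_injective (fun i : Fin 3 => if i = 0 then a else if i = 1 then b else c)
    (by intro i j hij; fin_cases i <;> fin_cases j <;> simp_all)
  simpa using this

lemma two_le_card {α : Type*} [Finite α] {a b : α} (hab : a ≠ b) : 2 ≤ Nat.card α := by
  have := Nat.card_le_card_of_injective (fun i : Fin 2 => if i = 0 then a else b)
    (by intro i j hij; fin_cases i <;> fin_cases j <;> simp_all)
  simpa using this

lemma Gnm_adj {n m : ℕ} {u v : Fin 2 × Fin n} : (Gnm n m).Adj u v ↔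
    (u.1 = v.1 ∧ u.2 ≠ v.2) ∨ (u.1 ≠ v.1 ∧ u.2 = v.2 ∧ u.2.val < m) := by
  rw [Gnm, SimpleGraph.fromRel_adj]
  constructor
  · rintro ⟨hne, ((⟨h1,h2⟩|⟨h1,h2,h3⟩)|(⟨h1,h2⟩|⟨h1,h2,h3⟩))⟩
    exacts [Or.inl ⟨h1,h2⟩, Or.inr ⟨h1,h2,h3⟩,
      Or.inl ⟨h1.symm, fun h => h2 h.symm⟩,
      Or.inr ⟨fun h => h1 h.symm, h2.symm, h2 ▸ h3⟩]
  · rintro (⟨h1,h2⟩|⟨h1,h2,h3⟩)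
    · exact ⟨fun h => h2 (congrArg Prod.snd h), Or.inl (Or.inl ⟨h1,h2⟩)⟩
    · exact ⟨fun h => h1 (congrArg Prod.fst h), Or.inl (Or.inr ⟨h1,h2,h3⟩)⟩

/-- for positive integers `n, m` with `2n/3 < m < n` and `n ≥ 7`,
for every edge `e` of `G(n,m)` there is a vertex set `S` with
`ω((G(n,m) − e) − S) ≥ 2` and `2|S| < m·ω((G(n,m) − e) − S)`; that is,
`G(n,m) − e` is not `m/2`-tough for any edge `e`. -/
theorem Gnm_edge_deletion_destroys_toughness (n m : ℕ) (hm : 0 < m)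
    (h1 : 2 * n < 3 * m) (h2 : m < n) (hn : 7 ≤ n) :
    ∀ e ∈ (Gnm n m).edgeSet, ∃ S : Set (Fin 2 × Fin n),
      2 ≤ numComp ((Gnm n m).deleteEdges {e}) S ∧
      2 * S.ncard < m * numComp ((Gnm n m).deleteEdges {e}) S := by
  have key2 : ∀ s t : Fin 2, s ≠ t → s = t + 1 := by decide
  intro e he
  induction e using Sym2.ind with | _ x y =>
  rw [SimpleGraph.mem_edgeSet, Gnm_adj] at he
  rcases he with ⟨hi, hab⟩ | ⟨hi, hcc, hlt⟩
  · -- Case 1: edge inside one of the two cliques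
    obtain ⟨i, a⟩ := x
    obtain ⟨i', b⟩ := y
    simp only at hi hab
    subst hi
    set j : Fin 2 := i + 1 with hj
    have hji : j ≠ i := by fin_cases i <;> decide
    set F : Finset (Fin 2 × Fin n) :=
      ({i} ×ˢ ((Finset.univ : Finset (Fin n)) \ {a, b})) ∪ {(j,a),(j,b)} with hF
    have hmemF : ∀ p : Fin 2 × Fin n,
        p ∈ F ↔ (p.1 = i ∧ p.2 ≠ a ∧ p.2 ≠ b) ∨ p = (j,a) ∨ p = (j,b) := by
      rintro ⟨t, k⟩
      simp [hF, Finset.mem_product, Prod.ext_iff]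
      tauto
    have pa : ((i,a) : Fin 2 × Fin n) ∈ ((↑F : Set (Fin 2 × Fin n))ᶜ) := by
      simp [hmemF, Prod.ext_iff, hji.symm]
    have pb : ((i,b) : Fin 2 × Fin n) ∈ ((↑F : Set (Fin 2 × Fin n))ᶜ) := by
      simp [hmemF, Prod.ext_iff, hji.symm]
    have hcnon : (((Finset.univ : Finset (Fin n)) \ {a, b})).Nonempty := by
      rw [← Finset.card_pos]
      have hsub : ({a,b} : Finset (Fin n)).card ≤ 2 :=
        (Finset.card_insert_le _ _).trans (by simp)
      have := Finset.le_card_sdiff ({a,b} : Finset (Fin n)) Finset.univ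
      simp only [Finset.card_univ, Fintype.card_fin] at this
      omega
    obtain ⟨c, hc⟩ := hcnon
    simp only [Finset.mem_sdiff, Finset.mem_insert, Finset.mem_singleton, Finset.mem_univ,
      true_and] at hc
    push_neg at hc
    have pc : ((j,c) : Fin 2 × Fin n) ∈ ((↑F : Set (Fin 2 × Fin n))ᶜ) := by
      simp [hmemF, Prod.ext_iff, hji, hc.1, hc.2]
    refine ⟨(↑F : Set (Fin 2 × Fin n)), ?_⟩
    set H := ((Gnm n m).deleteEdges {s((i,a),(i,b))}).induce ((↑F : Set (Fin 2 × Fin n))ᶜ)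
      with hH
    have isol : ∀ d : Fin n, (d = a ∨ d = b) →
        ∀ (pd : ((i,d) : Fin 2 × Fin n) ∈ ((↑F : Set (Fin 2 × Fin n))ᶜ)),
        ∀ u, ¬ H.Adj ⟨(i,d), pd⟩ u := by
      rintro d hd pd ⟨⟨t, k⟩, hu⟩ hadj
      rw [hH] at hadj
      simp only [SimpleGraph.comap_adj, Function.Embedding.coe_subtype,
        SimpleGraph.deleteEdges_adj, Set.mem_singleton_iff] at hadj
      obtain ⟨hadj', hne⟩ := hadj
      rw [Gnm_adj] at hadj'
      simp only [Set.mem_compl_iff, Finset.mem_coe, hmemF] at hu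
      push_neg at hu
      rcases hadj' with ⟨ht, hdk⟩ | ⟨ht, hdk, hklt⟩
      · -- same-row neighbor
        simp only at ht hdk
        subst ht
        have hk : k = a ∨ k = b := by
          by_cases h : k = a
          · exact Or.inl h
          · exact Or.inr (hu.1 rfl h)
        apply hne
        rcases hd with rfl | rfl <;> rcases hk with rfl | rfl
        · exact absurd rfl hdk
        · rfl
        · exact Sym2.eq_swap
        · exact absurd rfl hdk
      · -- cross neighbor
        simp only at ht hdk hklt
        subst hdk
        have htj : t = j := key2 t i fun h => ht h.symm
        subst htj
        rcases hd with rfl | rfl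
        · exact hu.2.1 rfl
        · exact hu.2.2 rfl
    have ha' : (a = a ∨ a = b) := Or.inl rfl
    have hb' : (b = a ∨ b = b) := Or.inr rfl
    have hcomp : ∀ (d : Fin n) (hd : d = a ∨ d = b)
        (pd : ((i,d) : Fin 2 × Fin n) ∈ ((↑F : Set (Fin 2 × Fin n))ᶜ))
        (w : ((↑F : Set (Fin 2 × Fin n))ᶜ : Set _)),
        H.connectedComponentMk ⟨(i,d), pd⟩ = H.connectedComponentMk w → (⟨(i,d), pd⟩ : ((↑F : Set (Fin 2 × Fin n))ᶜ : Set _)) = w := by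
      intro d hd pd w h
      exact reach_eq_of_isolated (isol d hd pd) ((SimpleGraph.ConnectedComponent.eq).mp h)
    have hne1 : H.connectedComponentMk ⟨(i,a), pa⟩ ≠ H.connectedComponentMk ⟨(i,b), pb⟩ := by
      intro h
      have := hcomp a ha' pa _ h
      simp only [Subtype.mk.injEq, Prod.mk.injEq] at this
      exact hab this.2
    have hne2 : H.connectedComponentMk ⟨(i,a), pa⟩ ≠ H.connectedComponentMk ⟨(j,c), pc⟩ := by
      intro h
      have := hcomp a ha' pa _ h
      simp only [Subtype.mk.injEq, Prod.mk.injEq] at this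
      exact hji this.1.symm
    have hne3 : H.connectedComponentMk ⟨(i,b), pb⟩ ≠ H.connectedComponentMk ⟨(j,c), pc⟩ := by
      intro h
      have := hcomp b hb' pb _ h
      simp only [Subtype.mk.injEq, Prod.mk.injEq] at this
      exact hji this.1.symm
    have hω : 3 ≤ numComp ((Gnm n m).deleteEdges {s((i,a),(i,b))}) (↑F : Set (Fin 2 × Fin n)) :=
      three_le_card hne1 hne2 hne3
    have hcard : (↑F : Set (Fin 2 × Fin n)).ncard ≤ n := by
      rw [Set.ncard_coe_finset]
      refine (Finset.card_union_le _ _).trans ?_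
      have epair : ({a, b} : Finset (Fin n)).card = 2 := by
        rw [Finset.card_insert_of_notMem (by simp [hab]), Finset.card_singleton]
      have e2 : ({((j,a) : Fin 2 × Fin n), (j,b)} : Finset (Fin 2 × Fin n)).card ≤ 2 :=
        (Finset.card_insert_le _ _).trans (by simp)
      have e3 : ({i} ×ˢ ((Finset.univ : Finset (Fin n)) \ {a, b})).card = n - 2 := by
        rw [Finset.card_product, Finset.card_singleton, one_mul,
          Finset.card_sdiff_of_subset (Finset.subset_univ _), epair, Finset.card_univ, Fintype.card_fin]
      omega
    constructor
    · omega
    · calc 2 * (↑F : Set (Fin 2 × Fin n)).ncard ≤ 2 * n := by omega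
        _ < 3 * m := h1
        _ = m * 3 := by ring
        _ ≤ m * numComp ((Gnm n m).deleteEdges {s((i,a),(i,b))}) (↑F : Set (Fin 2 × Fin n)) :=
            Nat.mul_le_mul_left m hω
  · -- Case 2: cross edge
    obtain ⟨i, a⟩ := x
    obtain ⟨i', b⟩ := y
    simp only at hi hcc hlt
    subst hcc
    have key2' : ∀ r : Fin 2, r ≠ i → r = i' := by
      intro r hr
      fin_cases i <;> fin_cases i' <;> fin_cases r <;> simp_all
    set T : Finset (Fin n) := Finset.univ.filter (fun k : Fin n => k.val < m ∧ k ≠ a) with hT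
    set F : Finset (Fin 2 × Fin n) := {i} ×ˢ T with hF
    have hmemF : ∀ p : Fin 2 × Fin n, p ∈ F ↔ p.1 = i ∧ p.2.val < m ∧ p.2 ≠ a := by
      rintro ⟨t, k⟩
      simp only [hF, hT, Finset.mem_product, Finset.mem_singleton, Finset.mem_filter,
        Finset.mem_univ, true_and]
    have px : ((i,a) : Fin 2 × Fin n) ∈ ((↑F : Set (Fin 2 × Fin n))ᶜ) := by
      simp [hmemF]
    have py : ((i',a) : Fin 2 × Fin n) ∈ ((↑F : Set (Fin 2 × Fin n))ᶜ) := by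
      simp [hmemF]
    refine ⟨(↑F : Set (Fin 2 × Fin n)), ?_⟩
    set H := ((Gnm n m).deleteEdges {s((i,a),(i',a))}).induce ((↑F : Set (Fin 2 × Fin n))ᶜ)
      with hH
    have hP : ∀ u w : (((↑F : Set (Fin 2 × Fin n))ᶜ : Set _)), H.Adj u w →
        (↑u : Fin 2 × Fin n).1 = i → (↑w : Fin 2 × Fin n).1 = i := by
      rintro ⟨⟨t, k⟩, hu⟩ ⟨⟨s, l⟩, hw⟩ hadj ht
      simp only at ht
      subst ht
      rw [hH] at hadj
      simp only [SimpleGraph.comap_adj, Function.Embedding.coe_subtype,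
        SimpleGraph.deleteEdges_adj, Set.mem_singleton_iff] at hadj
      obtain ⟨hadj', hne⟩ := hadj
      rw [Gnm_adj] at hadj'
      simp only [Set.mem_compl_iff, Finset.mem_coe, hmemF] at hu
      rcases hadj' with ⟨h1, h2⟩ | ⟨h1, h2, h3⟩
      · exact h1.symm
      · simp only at h1 h2 h3
        subst h2
        have hka : k = a := by tauto
        subst hka
        have hs : s = i' := key2' s fun h => h1 h.symm
        subst hs
        exact absurd rfl hne
    have hne1 : H.connectedComponentMk ⟨(i,a), px⟩ ≠ H.connectedComponentMk ⟨(i',a), py⟩ := by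
      intro h
      have := reach_invariant hP ((SimpleGraph.ConnectedComponent.eq).mp h) rfl
      simp only at this
      exact hi this.symm
    have hω : 2 ≤ numComp ((Gnm n m).deleteEdges {s((i,a),(i',a))}) (↑F : Set (Fin 2 × Fin n)) :=
      two_le_card hne1
    have hTm : T.card + 1 ≤ m := by
      have hsub : insert a T ⊆ Finset.univ.filter (fun k : Fin n => k.val < m) := by
        intro k hk
        simp only [Finset.mem_insert, hT, Finset.mem_filter, Finset.mem_univ, true_and] at hk ⊢
        rcases hk with rfl | ⟨h, _⟩
        exacts [hlt, h]
      have hins : (insert a T).card = T.card + 1 :=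
        Finset.card_insert_of_notMem (by simp [hT])
      have hfm : (Finset.univ.filter (fun k : Fin n => k.val < m)).card ≤ m := by
        have := Finset.card_le_card_of_injOn
          (s := Finset.univ.filter (fun k : Fin n => k.val < m)) (t := Finset.range m)
          (fun k : Fin n => (k : ℕ))
          (by intro k hk
              simpa using hk)
          (fun u _ v _ h => Fin.ext h)
        simpa [Finset.card_range] using this
      have := Finset.card_le_card hsub
      omega
    have hnc : (↑F : Set (Fin 2 × Fin n)).ncard = T.card := by
      rw [Set.ncard_coe_finset, hF, Finset.card_product, Finset.card_singleton, one_mul]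
    refine ⟨hω, ?_⟩
    calc 2 * (↑F : Set (Fin 2 × Fin n)).ncard < m * 2 := by omega
      _ ≤ m * numComp ((Gnm n m).deleteEdges {s((i,a),(i',a))}) (↑F : Set (Fin 2 × Fin n)) :=
          Nat.mul_le_mul_left m hω
end

section
/- For every integer n ≥ 7 with n ≡ 1 (mod 3), there exists a claw-free, non-regular, minimally t-tough graph G with t = (2n+1)/6 whose minimum degree is n − 1; in particular, δ(G) = n − 1 > 3t − 2, so the bound 3t − 2 fails as an upper bound for the minimum degree of minimally t-tough claw-free graphs. -/
/-!
Take two disjoint copies of `K_n` joined by a matching of size `s = (2n+1)/3 = 2t`. Matched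
vertices have degree `n`, the others `n - 1`, and two non-adjacent vertices lie in different
copies, so there is no claw. A set `S` whose removal disconnects the graph must meet every
matching edge, so `|S| ≥ s`, while at most two components (one per copy) can remain: the graph
is `t`-tough. After deleting a matching edge, the `s - 1 < 2t` endpoints of the other matching
edges in one copy separate the two copies. After deleting a clique edge `uv`, the other `n - 2`
vertices of that clique together with the two vertices of the other copy sharing an index with
`u` or `v` are `n < 3t` vertices whose removal isolates both `u` and `v`.
-/

open SimpleGraph

namespace SimpleGraph

variable {V β : Type*} {G : SimpleGraph V}

theorem Reachable.apply_eq_of_forall_adj {f : V → β} (hf : ∀ x y, G.Adj x y → f x = f y)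
    {x y : V} (h : G.Reachable x y) : f x = f y := by
  obtain ⟨p⟩ := h
  induction p with
  | nil => rfl
  | cons hadj _ ih => exact (hf _ _ hadj).trans ih

theorem not_reachable_of_forall_not_adj {x y : V} (hx : ∀ z, ¬ G.Adj x z) (hxy : x ≠ y) :
    ¬ G.Reachable x y := by
  rintro ⟨⟨⟩ | ⟨h, _⟩⟩
  · exact hxy rfl
  · exact hx _ h

theorem card_connectedComponent_le_of_fibers_clique [Finite β] (f : V → β)
    (hf : ∀ x y, x ≠ y → f x = f y → G.Adj x y) :
    Nat.card G.ConnectedComponent ≤ Nat.card β := by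
  refine Nat.card_le_card_of_injective (fun c => f c.out) fun c d hcd => ?_
  rw [← c.out_eq, ← d.out_eq]
  by_cases h : c.out = d.out
  · rw [h]
  · exact ConnectedComponent.sound (hf _ _ h hcd).reachable

theorem preconnected_of_fibers_clique (f : V → Bool)
    (hf : ∀ x y, x ≠ y → f x = f y → G.Adj x y)
    {u v : V} (huv : G.Adj u v) (hne : f u ≠ f v) : G.Preconnected := by
  have reach_of_eq : ∀ x y, f x = f y → G.Reachable x y := by
    intro x y h
    rcases eq_or_ne x y with rfl | hxy
    exacts [Reachable.refl x, (hf x y hxy h).reachable]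
  have reach_u : ∀ x, G.Reachable u x := by
    intro x
    have : f u = f x ∨ f v = f x := by
      revert hne; cases f u <;> cases f v <;> cases f x <;> simp
    rcases this with h | h
    · exact reach_of_eq u x h
    · exact huv.reachable.trans (reach_of_eq v x h)
  exact fun x y => (reach_u x).symm.trans (reach_u y)

theorem two_le_card_connectedComponent [Finite V] {x y : V} (h : ¬ G.Reachable x y) :
    2 ≤ Nat.card G.ConnectedComponent := by
  have : Nontrivial G.ConnectedComponent :=
    ⟨⟨_, _, fun hxy => h (ConnectedComponent.exact hxy)⟩⟩
  exact Finite.one_lt_card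

theorem three_le_card_connectedComponent [Finite V] {x y z : V} (hxy : ¬ G.Reachable x y)
    (hxz : ¬ G.Reachable x z) (hyz : ¬ G.Reachable y z) :
    3 ≤ Nat.card G.ConnectedComponent := by
  have hne : ∀ {a b : V}, ¬ G.Reachable a b →
      G.connectedComponentMk a ≠ G.connectedComponentMk b :=
    fun h hab => h (ConnectedComponent.exact hab)
  have h3 : ({G.connectedComponentMk x, G.connectedComponentMk y, G.connectedComponentMk z} :
      Set G.ConnectedComponent).ncard = 3 :=
    Set.ncard_eq_three.mpr ⟨_, _, _, hne hxy, hne hxz, hne hyz, rfl⟩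
  exact h3 ▸ Set.ncard_le_card _

end SimpleGraph

-- The first coordinate names the copy of `K_n`; `(false, i)` and `(true, i)` are matched
-- iff `i < s`.
def matchedCliques (n s : ℕ) : SimpleGraph (Bool × Fin n) where
  Adj v w := (v.1 = w.1 ∧ v.2 ≠ w.2) ∨ (v.1 ≠ w.1 ∧ v.2 = w.2 ∧ (v.2 : ℕ) < s)
  symm := by
    constructor
    rintro v w (⟨h1, h2⟩ | ⟨h1, h2, h3⟩)
    exacts [Or.inl ⟨h1.symm, h2.symm⟩, Or.inr ⟨h1.symm, h2.symm, h2 ▸ h3⟩]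
  loopless := by constructor; rintro v (⟨-, h⟩ | ⟨h, -⟩) <;> exact h rfl

namespace matchedCliques

variable {n s : ℕ}

theorem adj_iff {v w : Bool × Fin n} : (matchedCliques n s).Adj v w ↔
    (v.1 = w.1 ∧ v.2 ≠ w.2) ∨ (v.1 ≠ w.1 ∧ v.2 = w.2 ∧ (v.2 : ℕ) < s) :=
  Iff.rfl

theorem adj_of_fst_eq {v w : Bool × Fin n} (hvw : v ≠ w) (h : v.1 = w.1) :
    (matchedCliques n s).Adj v w :=
  Or.inl ⟨h, fun h2 => hvw (Prod.ext h h2)⟩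

theorem clawFree : ClawFree (matchedCliques n s) := by
  rintro ⟨-, a, b, c, hab, hac, hbc, -, -, -, hnab, hnac, hnbc⟩
  have fst_ne : ∀ {x y : Bool × Fin n}, x ≠ y → ¬ (matchedCliques n s).Adj x y →
      x.1 ≠ y.1 :=
    fun hxy hn h => hn (adj_of_fst_eq hxy h)
  have no_three_sides : ∀ x y z : Bool, x ≠ y → x ≠ z → y ≠ z → False := by decide
  exact no_three_sides _ _ _ (fst_ne hab hnab) (fst_ne hac hnac) (fst_ne hbc hnbc)

theorem ndeg_eq (σ : Bool) (i : Fin n) :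
    ndeg (matchedCliques n s) (σ, i) = if (i : ℕ) < s then n else n - 1 := by
  have hside : (Prod.mk σ '' {i}ᶜ : Set (Bool × Fin n)).ncard = n - 1 := by
    rw [Set.ncard_image_of_injective _ (Prod.mk_right_injective σ), Set.ncard_compl,
      Set.ncard_singleton, Nat.card_eq_fintype_card, Fintype.card_fin]
  have hnbr : ∀ w, (matchedCliques n s).Adj (σ, i) w ↔
      w ∈ Prod.mk σ '' {i}ᶜ ∨ (w = (!σ, i) ∧ (i : ℕ) < s) := by
    rintro ⟨τ, k⟩
    cases σ <;> cases τ <;> simp [adj_iff, eq_comm]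
  split_ifs with hi
  · have hset :
        (matchedCliques n s).neighborSet (σ, i) = insert (!σ, i) (Prod.mk σ '' {i}ᶜ) := by
      ext w; simp only [mem_neighborSet, hnbr, hi, and_true, Set.mem_insert_iff]; tauto
    rw [ndeg, hset, Set.ncard_insert_of_notMem (by simp), hside]
    have := i.pos
    omega
  · have hset : (matchedCliques n s).neighborSet (σ, i) = Prod.mk σ '' {i}ᶜ := by
      ext w; simp [hnbr, hi]
    rw [ndeg, hset, hside]

theorem adj_induce_of_fst_eq (S : Set (Bool × Fin n)) {x y : ↥Sᶜ} (hxy : x ≠ y)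
    (h : x.1.1 = y.1.1) : ((matchedCliques n s).induce Sᶜ).Adj x y :=
  adj_of_fst_eq (fun h' => hxy (Subtype.ext h')) h

theorem numComp_le_two (S : Set (Bool × Fin n)) : numComp (matchedCliques n s) S ≤ 2 := by
  refine (card_connectedComponent_le_of_fibers_clique (fun x : ↥Sᶜ => x.1.1)
    fun _ _ => adj_induce_of_fst_eq S).trans ?_
  simp

theorem mem_or_mem_of_two_le_numComp {S : Set (Bool × Fin n)}
    (hS : 2 ≤ numComp (matchedCliques n s) S) {j : Fin n} (hj : (j : ℕ) < s) :
    (false, j) ∈ S ∨ (true, j) ∈ S := by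
  by_contra! h
  have hpre : ((matchedCliques n s).induce Sᶜ).Preconnected :=
    preconnected_of_fibers_clique (fun x : ↥Sᶜ => x.1.1) (fun _ _ => adj_induce_of_fst_eq S)
      (u := ⟨_, h.1⟩) (v := ⟨_, h.2⟩) (Or.inr ⟨by simp, rfl, hj⟩) (by simp)
  have := Finite.card_le_one_iff_subsingleton.mpr hpre.subsingleton_connectedComponent
  unfold numComp at hS
  omega

theorem ncard_setOf_val_lt : {j : Fin n | (j : ℕ) < s}.ncard = min n s := by
  rw [Set.ncard_eq_toFinset_card']
  simp [Fin.card_filter_val_lt]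

theorem le_ncard_of_two_le_numComp (hsn : s ≤ n) {S : Set (Bool × Fin n)}
    (hS : 2 ≤ numComp (matchedCliques n s) S) : s ≤ S.ncard := by
  have hsub : {j : Fin n | (j : ℕ) < s} ⊆ Prod.snd '' S := by
    intro j hj
    rcases mem_or_mem_of_two_le_numComp hS hj with h | h
    exacts [⟨_, h, rfl⟩, ⟨_, h, rfl⟩]
  calc s = {j : Fin n | (j : ℕ) < s}.ncard := by rw [ncard_setOf_val_lt, min_eq_right hsn]
    _ ≤ (Prod.snd '' S).ncard := Set.ncard_le_ncard hsub
    _ ≤ S.ncard := Set.ncard_image_le S.toFinite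

theorem tough (hsn : s ≤ n) : Tough ((s : ℝ) / 2) (matchedCliques n s) := by
  intro S hS
  have hω : (numComp (matchedCliques n s) S : ℝ) ≤ 2 := by exact_mod_cast numComp_le_two S
  have hS' : (s : ℝ) ≤ S.ncard := by exact_mod_cast le_ncard_of_two_le_numComp hsn hS
  calc (s : ℝ) / 2 * numComp (matchedCliques n s) S ≤ (s : ℝ) / 2 * 2 := by gcongr
    _ ≤ S.ncard := by linarith

theorem not_tough_deleteEdges_matching {t : ℝ} (ht : (s : ℝ) < 2 * t + 1) (σ : Bool)
    {i : Fin n} (hi : (i : ℕ) < s) :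
    ¬ Tough t ((matchedCliques n s).deleteEdges {s((σ, i), (!σ, i))}) := by
  set G' := (matchedCliques n s).deleteEdges {s((σ, i), (!σ, i))}
  set S : Set (Bool × Fin n) := Prod.mk (!σ) '' ({j | (j : ℕ) < s} \ {i})
  have hside : ∀ x y : ↥Sᶜ, (G'.induce Sᶜ).Adj x y → x.1.1 = y.1.1 := by
    rintro ⟨⟨a, k⟩, hx⟩ ⟨⟨b, l⟩, hy⟩ hadj
    simp only [induce_adj, G', deleteEdges_adj, adj_iff, Set.mem_singleton_iff] at hadj
    rcases hadj with ⟨⟨h, -⟩ | ⟨hab, rfl, hk⟩, hne⟩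
    · exact h
    · simp only [S, Set.mem_compl_iff, Set.mem_image, Set.mem_sdiff, Set.mem_ofPred_eq,
        Set.mem_singleton_iff, Prod.mk.injEq] at hx hy
      cases a <;> cases b <;> cases σ <;> simp_all [Sym2.eq_swap]
  have hω : 2 ≤ numComp G' S := by
    refine two_le_card_connectedComponent (x := ⟨(σ, i), by simp [S]⟩)
      (y := ⟨(!σ, i), by simp [S]⟩) fun h => ?_
    simpa using h.apply_eq_of_forall_adj hside
  have hS : S.ncard + 1 ≤ s := by
    rw [Set.ncard_image_of_injective _ (Prod.mk_right_injective _),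
      Set.ncard_sdiff_singleton_of_mem (a := i) hi, ncard_setOf_val_lt]
    omega
  intro hT
  have hS' : (S.ncard : ℝ) + 1 ≤ s := by exact_mod_cast hS
  have hω' : (2 : ℝ) ≤ numComp G' S := by exact_mod_cast hω
  nlinarith [hT S hω]

def cliqueCut (σ : Bool) (i j : Fin n) : Set (Bool × Fin n) :=
  Set.range fun k => (if k = i ∨ k = j then !σ else σ, k)

theorem mem_cliqueCut {σ τ : Bool} {i j k : Fin n} :
    (τ, k) ∈ cliqueCut σ i j ↔ τ = if k = i ∨ k = j then !σ else σ := by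
  simp [cliqueCut, eq_comm]

theorem cliqueCut_comm (σ : Bool) (i j : Fin n) : cliqueCut σ i j = cliqueCut σ j i := by
  simp only [cliqueCut, or_comm]

theorem ncard_cliqueCut_le (σ : Bool) (i j : Fin n) : (cliqueCut σ i j).ncard ≤ n := by
  rw [cliqueCut, Set.ncard_range_of_injective fun _ _ h => congrArg Prod.snd h, Nat.card_fin]

theorem not_adj_deleteEdges_clique {σ : Bool} {i j : Fin n} {w : Bool × Fin n}
    (hw : w ∉ cliqueCut σ i j) :
    ¬ ((matchedCliques n s).deleteEdges {s((σ, i), (σ, j))}).Adj (σ, i) w := by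
  obtain ⟨τ, k⟩ := w
  rw [mem_cliqueCut] at hw
  simp only [deleteEdges_adj, adj_iff, Set.mem_singleton_iff]
  rintro ⟨⟨rfl, hik⟩ | ⟨hστ, rfl, -⟩, hne⟩
  · by_cases hkj : k = j
    · exact hne (by rw [hkj])
    · simp [Ne.symm hik, hkj] at hw
  · cases σ <;> cases τ <;> simp_all

theorem not_tough_deleteEdges_clique (hn : 2 < n) {t : ℝ} (ht : (n : ℝ) < 3 * t) (σ : Bool)
    {i j : Fin n} (hij : i ≠ j) :
    ¬ Tough t ((matchedCliques n s).deleteEdges {s((σ, i), (σ, j))}) := by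
  set G' := (matchedCliques n s).deleteEdges {s((σ, i), (σ, j))}
  set S := cliqueCut σ i j
  obtain ⟨k, hki, hkj⟩ := Fin.exists_ne_and_ne_of_two_lt i j hn
  have hiS : (σ, i) ∈ Sᶜ := by simp [S, mem_cliqueCut]
  have hjS : (σ, j) ∈ Sᶜ := by simp [S, mem_cliqueCut]
  have hkS : (!σ, k) ∈ Sᶜ := by simp [S, mem_cliqueCut, hki, hkj]
  have hi_iso : ∀ z : ↥Sᶜ, ¬ (G'.induce Sᶜ).Adj ⟨_, hiS⟩ z :=
    fun z => not_adj_deleteEdges_clique z.2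
  have hj_iso : ∀ z : ↥Sᶜ, ¬ (G'.induce Sᶜ).Adj ⟨_, hjS⟩ z := by
    intro z
    have hz : z.1 ∉ cliqueCut σ j i := cliqueCut_comm σ i j ▸ z.2
    simpa [induce_adj, G', Sym2.eq_swap] using not_adj_deleteEdges_clique (s := s) hz
  have hω : 3 ≤ numComp G' S := by
    refine three_le_card_connectedComponent (z := ⟨_, hkS⟩)
      (not_reachable_of_forall_not_adj hi_iso ?_) (not_reachable_of_forall_not_adj hi_iso ?_)
      (not_reachable_of_forall_not_adj hj_iso ?_) <;> simp [hij]
  intro hT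
  have hS : (S.ncard : ℝ) ≤ n := by exact_mod_cast ncard_cliqueCut_le σ i j
  have hω' : (3 : ℝ) ≤ numComp G' S := by exact_mod_cast hω
  nlinarith [hT S (by omega)]

theorem minTough (hsn : s ≤ n) (hn : 2 < n) (hns : 2 * n < 3 * s) :
    MinTough ((s : ℝ) / 2) (matchedCliques n s) := by
  refine ⟨tough hsn, fun e he => ?_⟩
  induction e using Sym2.ind with | _ v w => ?_
  obtain ⟨σ, i⟩ := v
  obtain ⟨τ, k⟩ := w
  rw [mem_edgeSet, adj_iff] at he
  rcases he with ⟨rfl, hik⟩ | ⟨hστ, rfl, hi⟩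
  · have ht : (n : ℝ) < 3 * ((s : ℝ) / 2) := by
      have : (2 * n : ℝ) < 3 * s := by exact_mod_cast hns
      linarith
    exact not_tough_deleteEdges_clique hn ht σ hik
  · obtain rfl : τ = !σ := Bool.eq_not_of_ne hστ.symm
    exact not_tough_deleteEdges_matching (by linarith) σ hi

end matchedCliques

/-- for every integer `n ≥ 7` with `n ≡ 1 (mod 3)`, there is a
claw-free, non-regular, minimally `t`-tough graph `G` with `t = (2n+1)/6` and
minimum degree `n − 1`; in particular `δ(G) = n − 1 > 3t − 2`. -/
theorem exists_clawfree_counterexample (n : ℕ) (hn : 7 ≤ n) (hmod : n % 3 = 1) :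
    ∃ (V : Type) (_ : Fintype V) (G : SimpleGraph V),
      ClawFree G ∧
      (∃ v w : V, ndeg G v ≠ ndeg G w) ∧
      MinTough ((2 * (n : ℝ) + 1) / 6) G ∧
      ((∀ v : V, n - 1 ≤ ndeg G v) ∧ (∃ v : V, ndeg G v = n - 1)) ∧
      ((n : ℝ) - 1 > 3 * ((2 * (n : ℝ) + 1) / 6) - 2) := by
  obtain ⟨s, hs⟩ : ∃ s, 3 * s = 2 * n + 1 := ⟨(2 * n + 1) / 3, by omega⟩
  have ht : (2 * (n : ℝ) + 1) / 6 = (s : ℝ) / 2 := by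
    have : (3 * s : ℝ) = 2 * n + 1 := by exact_mod_cast hs
    linarith
  have hdeg_last : ndeg (matchedCliques n s) (false, ⟨n - 1, by omega⟩) = n - 1 := by
    rw [matchedCliques.ndeg_eq, if_neg (show ¬ n - 1 < s by omega)]
  refine ⟨Bool × Fin n, inferInstance, matchedCliques n s, matchedCliques.clawFree,
    ⟨(false, ⟨0, by omega⟩), (false, ⟨n - 1, by omega⟩), ?_⟩,
    ht ▸ matchedCliques.minTough (by omega) (by omega) (by omega),
    ⟨fun ⟨σ, i⟩ => ?_, ⟨_, hdeg_last⟩⟩, by rw [ht]; linarith⟩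
  · rw [hdeg_last, matchedCliques.ndeg_eq, if_pos (show 0 < s by omega)]
    omega
  · rw [matchedCliques.ndeg_eq]
    split_ifs <;> omega
end

section
/- Let n ≥ 3 be an integer and let G be the Cartesian product K_n □ P_3, i.e., the graph with vertex set {v_{i,p} : i ∈ {1,2,3}, 1 ≤ p ≤ n} where for each i the vertices v_{i,1}, …, v_{i,n} form a complete graph K_n, and additionally v_{1,p} is adjacent to v_{2,p} and v_{2,p} is adjacent to v_{3,p} for each 1 ≤ p ≤ n. Then G is a non-regular minimally ((n+1)/3)-tough graph with minimum degree n and maximum degree n + 1. -/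
/-!
Deleting `S` from `K_n □ P_3` leaves each row a clique, so there are at most three components,
and if some column avoided `S` it would join all rows into one. Hence a disconnecting `S` meets
every column, `|S| ≥ n`, which suffices for two components. Three components force the middle
row to survive in some column `q` while `(0, q)` and `(2, q)` lie in `S`, so `|S| ≥ n + 1`.

For minimality, each of the three kinds of edges (in an outer row, in the middle row, between
rows) comes with an explicit set `S` that separates the graph without that edge into more than
`3|S|/(n+1)` components.
-/

open SimpleGraph

/-- The Cartesian product `K_n □ P_3`: three copies of `K_n` (indexed by the
first coordinate `i : Fin 3`), with `v_{1,p} ~ v_{2,p}` and `v_{2,p} ~ v_{3,p}`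
for every `p` (paper indices `1,2,3` correspond to `0,1,2`). -/
def knp3 (n : ℕ) : SimpleGraph (Fin 3 × Fin n) :=
  SimpleGraph.fromRel (fun x y =>
    (x.1 = y.1 ∧ x.2 ≠ y.2) ∨ (x.2 = y.2 ∧ x.1.val + 1 = y.1.val))

section ConnectedComponent

variable {W β : Type*} {H : SimpleGraph W}

lemma apply_eq_of_reachable (g : W → β) (hg : ∀ u v, H.Adj u v → g u = g v) {u v : W}
    (h : H.Reachable u v) : g u = g v := by
  obtain ⟨p⟩ := h
  induction p with
  | nil => rfl
  | cons hadj _ ih => exact (hg _ _ hadj).trans ih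

lemma card_le_card_connectedComponent [Finite W] (g : W → β) (hg : Function.Surjective g)
    (hadj : ∀ u v, H.Adj u v → g u = g v) : Nat.card β ≤ Nat.card H.ConnectedComponent := by
  refine Nat.card_le_card_of_surjective
    (ConnectedComponent.lift g fun _ _ p _ => apply_eq_of_reachable g hadj p.reachable) ?_
  intro b
  obtain ⟨v, rfl⟩ := hg b
  exact ⟨H.connectedComponentMk v, rfl⟩

lemma injective_apply_out (g : W → β) (hg : ∀ u v, g u = g v → H.Reachable u v) :
    Function.Injective fun c : H.ConnectedComponent => g c.out := by
  intro c d h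
  rw [← c.out_eq, ← d.out_eq]
  exact ConnectedComponent.sound (hg _ _ h)

lemma card_connectedComponent_le [Finite β] (g : W → β)
    (hg : ∀ u v, g u = g v → H.Reachable u v) : Nat.card H.ConnectedComponent ≤ Nat.card β :=
  Nat.card_le_card_of_injective _ (injective_apply_out g hg)

lemma surjective_and_apply_eq_of_card_connectedComponent_eq [Finite β] (g : W → β)
    (hg : ∀ u v, g u = g v → H.Reachable u v)
    (hcard : Nat.card H.ConnectedComponent = Nat.card β) :
    Function.Surjective g ∧ ∀ u v, H.Reachable u v → g u = g v := by
  have hbij := (Nat.bijective_iff_injective_and_card _).mpr ⟨injective_apply_out g hg, hcard⟩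
  have mem_out : ∀ w, ∃ c : H.ConnectedComponent, g c.out = g w ∧ c = H.connectedComponentMk w :=
    fun w => by
      obtain ⟨c, hc⟩ := hbij.2 (g w)
      refine ⟨c, hc, ?_⟩
      rw [← c.out_eq]
      exact ConnectedComponent.sound (hg _ _ hc)
  refine ⟨fun b => ?_, fun u v huv => ?_⟩
  · obtain ⟨c, rfl⟩ := hbij.2 b
    exact ⟨_, rfl⟩
  · obtain ⟨c, hcu, rfl⟩ := mem_out u
    obtain ⟨d, hdv, hd⟩ := mem_out v
    rw [← hcu, ← hdv, hd, ConnectedComponent.sound huv]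

end ConnectedComponent

lemma card_le_ncard_of_forall_exists_mk_mem {α β : Type*} [Finite α] [Finite β]
    {S : Set (α × β)} (hS : ∀ b, ∃ a, (a, b) ∈ S) : Nat.card β ≤ S.ncard := by
  have himage : Prod.snd '' S = Set.univ :=
    Set.eq_univ_of_forall fun b => (hS b).elim fun a h => ⟨(a, b), h, rfl⟩
  calc Nat.card β = (Prod.snd '' S).ncard := by rw [himage, Set.ncard_univ]
    _ ≤ S.ncard := Set.ncard_image_le

lemma ncard_le_of_injOn_snd {α β : Type*} [Finite β] {S : Set (α × β)}
    (h : S.InjOn Prod.snd) : S.ncard ≤ Nat.card β := by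
  simpa using Set.ncard_le_ncard_of_injOn Prod.snd (fun _ _ => Set.mem_univ _) h

lemma not_tough_of_labelling {V : Type*} [Finite V] {G : SimpleGraph V} {t : ℝ} {k : ℕ}
    (hk : 2 ≤ k) (S : Set V) (f : V → Fin k) (hsurj : ∀ i, ∃ v ∉ S, f v = i)
    (hadj : ∀ u v, u ∉ S → v ∉ S → G.Adj u v → f u = f v) (hS : (S.ncard : ℝ) < t * k) :
    ¬ Tough t G := by
  intro hT
  have hk' : k ≤ numComp G S := by
    simpa [numComp] using card_le_card_connectedComponent (H := G.induce Sᶜ) (fun v => f v.1)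
      (fun i => (hsurj i).elim fun v ⟨hv, hfv⟩ => ⟨⟨v, hv⟩, hfv⟩) fun u v => hadj u v u.2 v.2
  have ht : 0 ≤ t := by
    by_contra! ht
    have : t * k ≤ 0 := mul_nonpos_of_nonpos_of_nonneg ht.le k.cast_nonneg
    linarith [S.ncard.cast_nonneg (α := ℝ)]
  have : t * k ≤ t * numComp G S := mul_le_mul_of_nonneg_left (by exact_mod_cast hk') ht
  linarith [hT S (hk.trans hk')]

lemma ndeg_eq_degree {V : Type*} (G : SimpleGraph V) (v : V) [Fintype (G.neighborSet v)] :
    ndeg G v = G.degree v := by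
  rw [ndeg, Set.ncard_eq_toFinset_card']
  rfl

lemma ndeg_boxProd {α β : Type*} [Finite α] [Finite β] (G : SimpleGraph α) (H : SimpleGraph β)
    (x : α × β) : ndeg (G □ H) x = ndeg G x.1 + ndeg H x.2 := by
  classical
  have := Fintype.ofFinite α
  have := Fintype.ofFinite β
  simp only [ndeg_eq_degree, degree_boxProd]

lemma ndeg_top {α : Type*} [Finite α] (a : α) : ndeg (⊤ : SimpleGraph α) a = Nat.card α - 1 := by
  rw [ndeg, neighborSet_top, Set.ncard_compl, Set.ncard_singleton]

lemma ndeg_pathGraph_three (i : Fin 3) : ndeg (pathGraph 3) i = if i = 1 then 2 else 1 := by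
  have : (pathGraph 3).neighborSet i = if i = 1 then {0, 2} else {1} := by
    ext j
    fin_cases i <;> fin_cases j <;> simp [pathGraph_adj]
  rw [ndeg, this]
  fin_cases i <;> simp

lemma knp3_eq_boxProd (n : ℕ) : knp3 n = pathGraph 3 □ (⊤ : SimpleGraph (Fin n)) := by
  ext x y
  simp only [knp3, fromRel_adj, boxProd_adj, pathGraph_adj, top_adj, ne_eq, Prod.ext_iff]
  omega

lemma knp3_adj {n : ℕ} {x y : Fin 3 × Fin n} :
    (knp3 n).Adj x y ↔ (x.1 = y.1 ∧ x.2 ≠ y.2) ∨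
      (x.2 = y.2 ∧ (x.1.val + 1 = y.1.val ∨ y.1.val + 1 = x.1.val)) := by
  rw [knp3_eq_boxProd, boxProd_adj, pathGraph_adj, top_adj]
  tauto

lemma ndeg_knp3 {n : ℕ} (x : Fin 3 × Fin n) : ndeg (knp3 n) x = if x.1 = 1 then n + 1 else n := by
  have := x.2.pos
  rw [knp3_eq_boxProd, ndeg_boxProd, ndeg_top, ndeg_pathGraph_three, Nat.card_fin]
  split_ifs <;> omega

section Toughness

variable {n : ℕ} {S : Set (Fin 3 × Fin n)}

lemma knp3_induce_reachable_of_fst_eq {u v : ↥Sᶜ} (h : u.1.1 = v.1.1) :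
    ((knp3 n).induce Sᶜ).Reachable u v := by
  by_cases h' : u.1.2 = v.1.2
  · rw [Subtype.ext (Prod.ext h h')]
  · exact Adj.reachable (knp3_adj.mpr (Or.inl ⟨h, h'⟩))

lemma knp3_induce_reachable_of_snd_eq {u v : ↥Sᶜ} (h : u.1.2 = v.1.2)
    (hmid : ((1 : Fin 3), u.1.2) ∉ S) : ((knp3 n).induce Sᶜ).Reachable u v := by
  have to_mid : ∀ x : ↥Sᶜ, x.1.2 = u.1.2 → ((knp3 n).induce Sᶜ).Reachable x ⟨_, hmid⟩ := by
    rintro ⟨⟨i, p⟩, hx⟩ rfl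
    by_cases hi : i = 1
    · subst hi; rfl
    · refine Adj.reachable (knp3_adj.mpr (Or.inr ⟨rfl, ?_⟩))
      fin_cases i <;> simp_all
  exact (to_mid u rfl).trans (to_mid v h.symm).symm

lemma numComp_knp3_le_three : numComp (knp3 n) S ≤ 3 := by
  simpa [numComp] using card_connectedComponent_le (fun u : ↥Sᶜ => u.1.1)
    fun _ _ => knp3_induce_reachable_of_fst_eq

lemma exists_mem_column_of_two_le_numComp (hS : 2 ≤ numComp (knp3 n) S) (p : Fin n) :
    ∃ i, (i, p) ∈ S := by
  by_contra! hp
  have : numComp (knp3 n) S ≤ 1 := by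
    refine (card_connectedComponent_le (fun _ : ↥Sᶜ => ()) fun u v _ => ?_).trans_eq
      Nat.card_unique
    let u' : ↥Sᶜ := ⟨(u.1.1, p), hp _⟩
    let v' : ↥Sᶜ := ⟨(v.1.1, p), hp _⟩
    exact ((knp3_induce_reachable_of_fst_eq (u := u) (v := u') rfl).trans
      (knp3_induce_reachable_of_snd_eq (u := u') (v := v') rfl (hp 1))).trans
      (knp3_induce_reachable_of_fst_eq (u := v') (v := v) rfl)
  omega

lemma exists_outer_mem_of_numComp_eq_three (hS : numComp (knp3 n) S = 3) :
    ∃ q, ((0 : Fin 3), q) ∈ S ∧ ((2 : Fin 3), q) ∈ S := by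
  obtain ⟨hsurj, hrow⟩ := surjective_and_apply_eq_of_card_connectedComponent_eq
    (fun u : ↥Sᶜ => u.1.1) (fun _ _ => knp3_induce_reachable_of_fst_eq)
    (by simpa [numComp] using hS)
  obtain ⟨⟨⟨i, q⟩, hq⟩, rfl : i = 1⟩ := hsurj 1
  refine ⟨q, ?_, ?_⟩ <;> by_contra hmem
  · simpa using hrow ⟨_, hmem⟩ ⟨_, hq⟩ (Adj.reachable (knp3_adj.mpr (Or.inr ⟨rfl, by simp⟩)))
  · simpa using hrow ⟨_, hmem⟩ ⟨_, hq⟩ (Adj.reachable (knp3_adj.mpr (Or.inr ⟨rfl, by simp⟩)))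

lemma knp3_tough (hn : 2 ≤ n) : Tough (((n : ℝ) + 1) / 3) (knp3 n) := by
  intro S hS
  have hcol := exists_mem_column_of_two_le_numComp hS
  have hcard : n ≤ S.ncard := by simpa using card_le_ncard_of_forall_exists_mk_mem hcol
  rcases (by have := numComp_knp3_le_three (S := S); omega :
    numComp (knp3 n) S = 2 ∨ numComp (knp3 n) S = 3) with h | h
  · rw [h]
    have : (n : ℝ) ≤ S.ncard := by exact_mod_cast hcard
    have : (2 : ℝ) ≤ n := by exact_mod_cast hn
    push_cast
    linarith
  · obtain ⟨q, h0, h2⟩ := exists_outer_mem_of_numComp_eq_three h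
    have hcol' : ∀ p, ∃ i, (i, p) ∈ S \ {((0 : Fin 3), q)} := fun p => by
      by_cases hp : p = q
      · exact ⟨2, by simp [hp, h2]⟩
      · exact (hcol p).imp fun i hi => ⟨hi, by simp [hp]⟩
    have : n + 1 ≤ S.ncard := by
      have := card_le_ncard_of_forall_exists_mk_mem hcol'
      rw [Nat.card_fin] at this
      rw [← Set.ncard_sdiff_singleton_add_one h0]
      omega
    rw [h]
    have : (n : ℝ) + 1 ≤ S.ncard := by exact_mod_cast this
    push_cast
    linarith

end Toughness

section Minimality

variable {n : ℕ}

lemma not_tough_knp3_deleteEdges_outer_row {e : Fin 3} (he : e ≠ 1) {p q : Fin n}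
    (hpq : p ≠ q) : ¬ Tough (((n : ℝ) + 1) / 3) ((knp3 n).deleteEdges {s((e, p), (e, q))}) := by
  set S : Set (Fin 3 × Fin n) := {x | (x.1 = e ∧ x.2 ≠ p ∧ x.2 ≠ q) ∨ x = (1, p) ∨ x = (1, q)}
  have hS : S.ncard ≤ n := by
    refine (ncard_le_of_injOn_snd ?_).trans_eq (Nat.card_fin n)
    rintro ⟨i, r⟩ hx ⟨j, s⟩ hy (rfl : r = s)
    simp only [S, Set.mem_ofPred_eq, Prod.mk.injEq] at hx hy
    grind
  refine not_tough_of_labelling (k := 3) (by norm_num) S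
    (fun x => if x = (e, p) then 0 else if x = (e, q) then 1 else 2) ?_ ?_ ?_
  · intro i
    fin_cases i
    · exact ⟨(e, p), by simp [S, he, hpq], by simp⟩
    · exact ⟨(e, q), by simp [S, he, hpq.symm], by simp [hpq.symm]⟩
    · exact ⟨(e.rev, p), by fin_cases e <;> simp_all [S], by fin_cases e <;> simp_all⟩
  · rintro ⟨i, r⟩ ⟨j, s⟩ hx hy hadj
    rw [deleteEdges_adj, knp3_adj] at hadj
    simp only [S, Set.mem_ofPred_eq, Prod.mk.injEq, Set.mem_singleton_iff, Sym2.eq_iff]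
      at hx hy hadj
    fin_cases e <;> fin_cases i <;> fin_cases j <;> simp_all <;> grind
  · have : (S.ncard : ℝ) ≤ n := by exact_mod_cast hS
    push_cast
    linarith

lemma not_tough_knp3_deleteEdges_middle_row (hn : 3 ≤ n) {p q : Fin n} (hpq : p ≠ q) :
    ¬ Tough (((n : ℝ) + 1) / 3) ((knp3 n).deleteEdges {s(((1 : Fin 3), p), (1, q))}) := by
  set S : Set (Fin 3 × Fin n) :=
    {x | (x.1 = 1 ∧ x.2 ≠ p ∧ x.2 ≠ q) ∨ (x.1 ≠ 1 ∧ (x.2 = p ∨ x.2 = q))}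
  have hS : S.ncard ≤ n + 2 := by
    have hinj : (S \ {(2, p), (2, q)}).InjOn Prod.snd := by
      rintro ⟨i, r⟩ hx ⟨j, s⟩ hy (rfl : r = s)
      simp only [S, Set.mem_sdiff, Set.mem_ofPred_eq, Set.mem_insert_iff, Set.mem_singleton_iff,
        Prod.mk.injEq] at hx hy
      grind
    calc S.ncard ≤ (S \ {(2, p), (2, q)}).ncard + ({(2, p), (2, q)} : Set _).ncard :=
          Set.ncard_le_ncard_sdiff_add_ncard _ _
      _ ≤ n + 2 := by
        gcongr
        · simpa using ncard_le_of_injOn_snd hinj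
        · exact (Set.ncard_insert_le _ _).trans (by simp)
  obtain ⟨r, hrp, hrq⟩ : ∃ r : Fin n, r ≠ p ∧ r ≠ q := by
    simpa using Finset.exists_mem_notMem_of_card_lt_card (s := {p, q}) (t := Finset.univ)
      ((Finset.card_le_two).trans_lt (by simp; omega))
  refine not_tough_of_labelling (k := 4) (by norm_num) S
    (fun x => if x = (1, p) then 0 else if x = (1, q) then 1 else if x.1 = 0 then 2 else 3)
    ?_ ?_ ?_
  · intro i
    fin_cases i
    · exact ⟨(1, p), by simp [S, hpq], by simp⟩
    · exact ⟨(1, q), by simp [S, hpq.symm], by simp [hpq.symm]⟩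
    · exact ⟨(0, r), by simp [S, hrp, hrq], by simp⟩
    · exact ⟨(2, r), by simp [S, hrp, hrq], by simp⟩
  · rintro ⟨i, r⟩ ⟨j, s⟩ hx hy hadj
    rw [deleteEdges_adj, knp3_adj] at hadj
    simp only [S, Set.mem_ofPred_eq, Prod.mk.injEq, Set.mem_singleton_iff, Sym2.eq_iff]
      at hx hy hadj
    fin_cases i <;> fin_cases j <;> simp_all; grind
  · have : (S.ncard : ℝ) ≤ n + 2 := by exact_mod_cast hS
    have : (3 : ℝ) ≤ n := by exact_mod_cast hn
    push_cast
    linarith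

lemma not_tough_knp3_deleteEdges_column (hn : 2 ≤ n) {e : Fin 3} (he : e ≠ 1) (p : Fin n) :
    ¬ Tough (((n : ℝ) + 1) / 3) ((knp3 n).deleteEdges {s((e, p), (1, p))}) := by
  set S : Set (Fin 3 × Fin n) := {x | (x.1 = 1 ∧ x.2 ≠ p) ∨ x = (e.rev, p)}
  have hS : S.ncard ≤ n := by
    refine (ncard_le_of_injOn_snd ?_).trans_eq (Nat.card_fin n)
    rintro ⟨i, r⟩ hx ⟨j, s⟩ hy (rfl : r = s)
    simp only [S, Set.mem_ofPred_eq, Prod.mk.injEq] at hx hy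
    grind
  obtain ⟨q, hq⟩ : ∃ q : Fin n, q ≠ p :=
    have : Nontrivial (Fin n) := Fin.nontrivial_iff_two_le.mpr hn
    exists_ne p
  refine not_tough_of_labelling (k := 3) (by norm_num) S
    (fun x => if x.1 = e then 0 else if x = (1, p) then 1 else 2) ?_ ?_ ?_
  · intro i
    fin_cases i
    · exact ⟨(e, p), by fin_cases e <;> simp_all [S], by simp⟩
    · exact ⟨(1, p), by fin_cases e <;> simp_all [S], by simp [he.symm]⟩
    · exact ⟨(e.rev, q), by fin_cases e <;> simp_all [S], by fin_cases e <;> simp_all⟩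
  · rintro ⟨i, r⟩ ⟨j, s⟩ hx hy hadj
    rw [deleteEdges_adj, knp3_adj] at hadj
    simp only [S, Set.mem_ofPred_eq, Prod.mk.injEq, Set.mem_singleton_iff, Sym2.eq_iff]
      at hx hy hadj
    fin_cases e <;> fin_cases i <;> fin_cases j <;> simp_all <;> grind
  · have : (S.ncard : ℝ) ≤ n := by exact_mod_cast hS
    push_cast
    linarith

lemma not_tough_knp3_deleteEdges (hn : 3 ≤ n) {e : Sym2 (Fin 3 × Fin n)}
    (he : e ∈ (knp3 n).edgeSet) : ¬ Tough (((n : ℝ) + 1) / 3) ((knp3 n).deleteEdges {e}) := by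
  induction e using Sym2.ind with
  | _ x y =>
    obtain ⟨i, p⟩ := x
    obtain ⟨j, q⟩ := y
    rw [mem_edgeSet, knp3_adj] at he
    dsimp only at he
    rcases he with ⟨rfl, hpq⟩ | ⟨rfl, hij⟩
    · by_cases hi : i = 1
      · exact hi ▸ not_tough_knp3_deleteEdges_middle_row hn hpq
      · exact not_tough_knp3_deleteEdges_outer_row hi hpq
    · obtain ⟨k, hk, rfl, rfl⟩ | ⟨k, hk, rfl, rfl⟩ :
          (∃ k ≠ 1, i = k ∧ j = 1) ∨ (∃ k ≠ 1, i = 1 ∧ j = k) := by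
        fin_cases i <;> fin_cases j <;> simp_all
      · exact not_tough_knp3_deleteEdges_column (by omega) hk p
      · rw [Sym2.eq_swap]
        exact not_tough_knp3_deleteEdges_column (by omega) hk p

end Minimality

/-- for `n ≥ 3`, the Cartesian product `K_n □ P_3` is a
non-regular, minimally `(n+1)/3`-tough graph with minimum degree `n` and
maximum degree `n + 1`. -/
theorem knp3_minimally_tough (n : ℕ) (hn : 3 ≤ n) :
    (∃ v w, ndeg (knp3 n) v ≠ ndeg (knp3 n) w) ∧
    MinTough (((n : ℝ) + 1) / 3) (knp3 n) ∧
    ((∀ v, n ≤ ndeg (knp3 n) v) ∧ (∃ v, ndeg (knp3 n) v = n)) ∧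
    ((∀ v, ndeg (knp3 n) v ≤ n + 1) ∧ (∃ v, ndeg (knp3 n) v = n + 1)) := by
  have p : Fin n := ⟨0, by omega⟩
  refine ⟨⟨(0, p), (1, p), ?_⟩, ⟨knp3_tough (by omega), fun e => not_tough_knp3_deleteEdges hn⟩,
    ⟨fun v => ?_, (0, p), ?_⟩, ⟨fun v => ?_, (1, p), ?_⟩⟩ <;>
    simp only [ndeg_knp3] <;> split_ifs <;> omega
end

section
/- Let n ≥ 3 be an integer and let G be the Cartesian product K_n □ P_3, with vertex set {v_{i,p} : i ∈ {1,2,3}, 1 ≤ p ≤ n} where for each i the vertices v_{i,1}, …, v_{i,n} form a complete graph, and v_{1,p} is adjacent to v_{2,p} and v_{2,p} is adjacent to v_{3,p} for each p. Then the toughness of G equals (n+1)/3; that is, every vertex set S with ω(G − S) ≥ 2 satisfies 3|S| ≥ (n+1)·ω(G − S), and the set S = {v_{2,1}, …, v_{2,n−1}} ∪ {v_{1,n}, v_{3,n}} satisfies |S| = n + 1 and ω(G − S) = 3. -/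
open SimpleGraph

/-- The cut-set of STATEMENT 13: `{v_{2,1}, …, v_{2,n−1}} ∪ {v_{1,n}, v_{3,n}}`
(zero-indexed: middle layer except the last column, plus the outer two vertices
of the last column). -/
def knp3Cut (n : ℕ) : Set (Fin 3 × Fin n) :=
  {x | (x.1 = 1 ∧ x.2.val < n - 1) ∨ (x.1 ≠ 1 ∧ x.2.val = n - 1)}

namespace Knp3Aux

variable {n : ℕ}

lemma adj_of_row {x y : Fin 3 × Fin n} (h1 : x.1 = y.1) (h2 : x.2 ≠ y.2) :
    (knp3 n).Adj x y := by
  rw [knp3, fromRel_adj]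
  exact ⟨fun h => h2 (congrArg Prod.snd h), Or.inl (Or.inl ⟨h1, h2⟩)⟩

lemma adj_of_col {x y : Fin 3 × Fin n} (h1 : x.2 = y.2) (h2 : x.1.val + 1 = y.1.val) :
    (knp3 n).Adj x y := by
  rw [knp3, fromRel_adj]
  refine ⟨fun h => ?_, Or.inl (Or.inr ⟨h1, h2⟩)⟩
  rw [h] at h2; omega

lemma adj_cases {x y : Fin 3 × Fin n} (h : (knp3 n).Adj x y) :
    (x.1 = y.1 ∧ x.2 ≠ y.2) ∨
      (x.2 = y.2 ∧ (x.1.val + 1 = y.1.val ∨ y.1.val + 1 = x.1.val)) := by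
  rw [knp3, fromRel_adj] at h
  rcases h.2 with (⟨h1, h2⟩ | ⟨h1, h2⟩) | (⟨h1, h2⟩ | ⟨h1, h2⟩)
  · exact Or.inl ⟨h1, h2⟩
  · exact Or.inr ⟨h1, Or.inl h2⟩
  · exact Or.inl ⟨h1.symm, h2.symm⟩
  · exact Or.inr ⟨h1.symm, Or.inr h2⟩

lemma reach_row {S : Set (Fin 3 × Fin n)} {a b : ↥Sᶜ}
    (h : (a : Fin 3 × Fin n).1 = (b : Fin 3 × Fin n).1) :
    ((knp3 n).induce Sᶜ).Reachable a b := by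
  rcases eq_or_ne a b with rfl | hne
  · exact Reachable.refl _
  · have hc : (a : Fin 3 × Fin n).2 ≠ (b : Fin 3 × Fin n).2 := by
      intro hc
      exact hne (Subtype.ext (Prod.ext h hc))
    exact (show ((knp3 n).induce Sᶜ).Adj a b from adj_of_row h hc).reachable

lemma reach_to_mid {S : Set (Fin 3 × Fin n)} (a : ↥Sᶜ)
    (hmid : ((1 : Fin 3), (a : Fin 3 × Fin n).2) ∈ Sᶜ) :
    ((knp3 n).induce Sᶜ).Reachable a ⟨((1 : Fin 3), (a : Fin 3 × Fin n).2), hmid⟩ := by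
  set m : ↥Sᶜ := ⟨((1 : Fin 3), (a : Fin 3 × Fin n).2), hmid⟩ with hm
  have h3 : (a : Fin 3 × Fin n).1.val = 0 ∨ (a : Fin 3 × Fin n).1.val = 1 ∨
      (a : Fin 3 × Fin n).1.val = 2 := by omega
  rcases h3 with hv | hv | hv
  · exact (show ((knp3 n).induce Sᶜ).Adj a m from
      adj_of_col rfl (by simp [hm, hv])).reachable
  · have : a = m := by
      apply Subtype.ext
      exact Prod.ext (Fin.ext (by simp [hm, hv])) rfl
    rw [this]
  · exact ((show ((knp3 n).induce Sᶜ).Adj m a from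
      adj_of_col rfl (by simp [hm, hv])).reachable).symm

lemma col_hit {S : Set (Fin 3 × Fin n)}
    (hω : 2 ≤ Nat.card ((knp3 n).induce Sᶜ).ConnectedComponent) :
    ∀ p : Fin n, ∃ i : Fin 3, (i, p) ∈ S := by
  intro p
  by_contra hcon
  push_neg at hcon
  have hsub : Subsingleton ((knp3 n).induce Sᶜ).ConnectedComponent := by
    constructor
    intro C D
    rw [← C.out_eq, ← D.out_eq]
    apply ConnectedComponent.sound
    have hmem : ∀ i : Fin 3, (i, p) ∈ Sᶜ := fun i => hcon i
    have key : ∀ a : ↥Sᶜ, ((knp3 n).induce Sᶜ).Reachable a ⟨((1 : Fin 3), p), hmem 1⟩ := by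
      intro a
      have h1 : ((a : Fin 3 × Fin n).1, p) ∈ Sᶜ := hmem _
      have r1 : ((knp3 n).induce Sᶜ).Reachable a ⟨((a : Fin 3 × Fin n).1, p), h1⟩ :=
        reach_row rfl
      have r2 := reach_to_mid (⟨((a : Fin 3 × Fin n).1, p), h1⟩ : ↥Sᶜ) (hmem 1)
      exact r1.trans r2
    exact (key C.out).trans (key D.out).symm
  have hle : Nat.card ((knp3 n).induce Sᶜ).ConnectedComponent ≤ 1 := by
    rcases isEmpty_or_nonempty ((knp3 n).induce Sᶜ).ConnectedComponent with he | hne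
    · simp [Nat.card_of_isEmpty]
    · exact le_of_eq Nat.card_unique
  omega

lemma ncard_ge {S : Set (Fin 3 × Fin n)}
    (hω : 2 ≤ Nat.card ((knp3 n).induce Sᶜ).ConnectedComponent) : n ≤ S.ncard := by
  choose f hf using col_hit hω
  have hinj : Function.Injective (fun p : Fin n => (⟨(f p, p), hf p⟩ : ↥S)) := by
    intro p q h
    simpa using congrArg (fun x : ↥S => (x : Fin 3 × Fin n).2) h
  have := Nat.card_le_card_of_injective _ hinj
  simpa [Nat.card_coe_set_eq] using this

lemma out_row_injective (S : Set (Fin 3 × Fin n)) :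
    Function.Injective
      (fun C : ((knp3 n).induce Sᶜ).ConnectedComponent => (C.out : Fin 3 × Fin n).1) := by
  intro C D h
  rw [← C.out_eq, ← D.out_eq]
  exact ConnectedComponent.sound (reach_row h)

lemma comp_le_three (S : Set (Fin 3 × Fin n)) :
    Nat.card ((knp3 n).induce Sᶜ).ConnectedComponent ≤ 3 := by
  have := Nat.card_le_card_of_injective _ (out_row_injective (n := n) S)
  simpa using this

lemma ncard_ge_succ {S : Set (Fin 3 × Fin n)}
    (hω : 3 ≤ Nat.card ((knp3 n).induce Sᶜ).ConnectedComponent) : n + 1 ≤ S.ncard := by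
  classical
  set g := fun C : ((knp3 n).induce Sᶜ).ConnectedComponent => (C.out : Fin 3 × Fin n).1
    with hg
  have hbij : Function.Bijective g :=
    (out_row_injective S).bijective_of_nat_card_le (by simpa using hω)
  obtain ⟨C0, hC0⟩ := hbij.2 0
  obtain ⟨C1, hC1⟩ := hbij.2 1
  obtain ⟨C2, hC2⟩ := hbij.2 2
  set u : ↥Sᶜ := C0.out with hu
  set v : ↥Sᶜ := C1.out with hv
  set w : ↥Sᶜ := C2.out with hw
  have hu1 : (u : Fin 3 × Fin n).1 = 0 := hC0
  have hv1 : (v : Fin 3 × Fin n).1 = 1 := hC1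
  have hw1 : (w : Fin 3 × Fin n).1 = 2 := hC2
  -- distinct components ⇒ no reachability between their outs
  have hnr : ∀ (C D : ((knp3 n).induce Sᶜ).ConnectedComponent), g C ≠ g D →
      ¬ ((knp3 n).induce Sᶜ).Reachable C.out D.out := by
    intro C D hne hr
    exact hne (congrArg g (by rw [← C.out_eq, ← D.out_eq]; exact ConnectedComponent.sound hr))
  have h01 : ¬ ((knp3 n).induce Sᶜ).Reachable u v := by
    refine hnr C0 C1 ?_
    rw [hC0, hC1]; decide
  have h12 : ¬ ((knp3 n).induce Sᶜ).Reachable v w := by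
    refine hnr C1 C2 ?_
    rw [hC1, hC2]; decide
  -- key column claim
  have key : ∀ p : Fin n,
      ((1 : Fin 3), p) ∈ S ∨ (((0 : Fin 3), p) ∈ S ∧ ((2 : Fin 3), p) ∈ S) := by
    intro p
    by_cases h1 : ((1 : Fin 3), p) ∈ S
    · exact Or.inl h1
    · have h1' : ((1 : Fin 3), p) ∈ Sᶜ := h1
      refine Or.inr ⟨?_, ?_⟩
      · by_contra h0
        have h0' : ((0 : Fin 3), p) ∈ Sᶜ := h0
        have r1 : ((knp3 n).induce Sᶜ).Reachable u ⟨((0 : Fin 3), p), h0'⟩ :=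
          reach_row (by rw [hu1])
        have r2 : ((knp3 n).induce Sᶜ).Adj ⟨((0 : Fin 3), p), h0'⟩ ⟨((1 : Fin 3), p), h1'⟩ :=
          adj_of_col rfl rfl
        have r3 : ((knp3 n).induce Sᶜ).Reachable ⟨((1 : Fin 3), p), h1'⟩ v :=
          reach_row (by rw [hv1])
        exact h01 ((r1.trans r2.reachable).trans r3)
      · by_contra h2
        have h2' : ((2 : Fin 3), p) ∈ Sᶜ := h2
        have r1 : ((knp3 n).induce Sᶜ).Reachable v ⟨((1 : Fin 3), p), h1'⟩ :=
          reach_row (by rw [hv1])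
        have r2 : ((knp3 n).induce Sᶜ).Adj ⟨((1 : Fin 3), p), h1'⟩ ⟨((2 : Fin 3), p), h2'⟩ :=
          adj_of_col rfl rfl
        have r3 : ((knp3 n).induce Sᶜ).Reachable ⟨((2 : Fin 3), p), h2'⟩ w :=
          reach_row (by rw [hw1])
        exact h12 ((r1.trans r2.reachable).trans r3)
  -- the column of v has both outer vertices deleted
  have hvS : ((1 : Fin 3), (v : Fin 3 × Fin n).2) ∉ S := by
    have hv2 := v.2
    have : (v : Fin 3 × Fin n) = ((1 : Fin 3), (v : Fin 3 × Fin n).2) :=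
      Prod.ext hv1 rfl
    rw [this] at hv2
    exact hv2
  have keyv : ((0 : Fin 3), (v : Fin 3 × Fin n).2) ∈ S ∧
      ((2 : Fin 3), (v : Fin 3 × Fin n).2) ∈ S := by
    rcases key (v : Fin 3 × Fin n).2 with h | h
    · exact absurd h hvS
    · exact h
  -- injection Option (Fin n) → ↥S
  set q := (v : Fin 3 × Fin n).2 with hq
  have Fdef : ∀ p : Fin n, ¬ ((1 : Fin 3), p) ∈ S → ((0 : Fin 3), p) ∈ S := by
    intro p hp
    rcases key p with h | h
    · exact absurd h hp
    · exact h.1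
  classical
  set F : Option (Fin n) → ↥S := fun o =>
    match o with
    | none => ⟨((2 : Fin 3), q), keyv.2⟩
    | some p =>
        if h : ((1 : Fin 3), p) ∈ S then ⟨((1 : Fin 3), p), h⟩
        else ⟨((0 : Fin 3), p), Fdef p h⟩
    with hF
  have hFrow : ∀ p : Fin n, ((F (some p) : Fin 3 × Fin n).1 = 1 ∨
      (F (some p) : Fin 3 × Fin n).1 = 0) ∧ (F (some p) : Fin 3 × Fin n).2 = p := by
    intro p
    by_cases h : ((1 : Fin 3), p) ∈ S
    · simp [hF, h]
    · simp [hF, h]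
  have hFinj : Function.Injective F := by
    intro o1 o2 h
    match o1, o2 with
    | none, none => rfl
    | none, some p =>
        exfalso
        have h2 := congrArg (fun x : ↥S => (x : Fin 3 × Fin n).1) h
        rcases (hFrow p).1 with hr | hr <;>
          · simp only [hF] at h2
            rw [hr] at h2
            exact absurd h2 (by decide)
    | some p, none =>
        exfalso
        have h2 := congrArg (fun x : ↥S => (x : Fin 3 × Fin n).1) h
        rcases (hFrow p).1 with hr | hr <;>
          · simp only [hF] at h2
            rw [hr] at h2
            exact absurd h2 (by decide)
    | some p, some p' =>
        have h2 := congrArg (fun x : ↥S => (x : Fin 3 × Fin n).2) h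
        rw [(hFrow p).2, (hFrow p').2] at h2
        rw [h2]
  calc n + 1 = Nat.card (Option (Fin n)) := by simp
    _ ≤ Nat.card ↥S := Nat.card_le_card_of_injective _ hFinj
    _ = S.ncard := Nat.card_coe_set_eq S

lemma cut_ncard (hn : 3 ≤ n) : (knp3Cut n).ncard = n + 1 := by
  classical
  set A : Finset (Fin 3 × Fin n) :=
    Finset.univ.image (fun r : Fin (n - 1) => ((1 : Fin 3), (⟨r.val, by omega⟩ : Fin n)))
    with hA
  set B : Finset (Fin 3 × Fin n) :=
    {((0 : Fin 3), (⟨n - 1, by omega⟩ : Fin n)), ((2 : Fin 3), (⟨n - 1, by omega⟩ : Fin n))}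
    with hB
  have hmemA : ∀ x : Fin 3 × Fin n, x ∈ A ↔ (x.1 = 1 ∧ x.2.val < n - 1) := by
    rintro ⟨i, p⟩
    simp only [hA, Finset.mem_image, Finset.mem_univ, true_and, Prod.mk.injEq]
    constructor
    · rintro ⟨r, hr1, hr2⟩
      refine ⟨hr1.symm, ?_⟩
      have : p.val = r.val := by rw [← hr2]
      rw [this]; exact r.2
    · rintro ⟨h1, h2⟩
      exact ⟨⟨p.val, h2⟩, h1.symm, Fin.ext rfl⟩
  have hmemB : ∀ x : Fin 3 × Fin n, x ∈ B ↔ (x.1 ≠ 1 ∧ x.2.val = n - 1) := by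
    rintro ⟨i, p⟩
    simp only [hB, Finset.mem_insert, Finset.mem_singleton, Prod.mk.injEq]
    have hi := i.isLt
    constructor
    · rintro (⟨h1, h2⟩ | ⟨h1, h2⟩) <;>
        exact ⟨by rw [h1]; decide, by rw [h2]⟩
    · rintro ⟨h1, h2⟩
      have h1' : i.val ≠ 1 := fun h => h1 (Fin.ext h)
      have : i.val = 0 ∨ i.val = 2 := by omega
      rcases this with h | h
      · exact Or.inl ⟨Fin.ext h, Fin.ext h2⟩
      · exact Or.inr ⟨Fin.ext h, Fin.ext h2⟩
  have hset : knp3Cut n = ↑(A ∪ B) := by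
    ext x
    simp only [knp3Cut, Set.mem_setOf_eq, Finset.coe_union, Set.mem_union, Finset.mem_coe,
      hmemA, hmemB]
  rw [hset, Set.ncard_coe_finset]
  have hdis : Disjoint A B := by
    rw [Finset.disjoint_left]
    intro x hxA hxB
    exact ((hmemB x).mp hxB).1 ((hmemA x).mp hxA).1
  rw [Finset.card_union_of_disjoint hdis]
  have hcardA : A.card = n - 1 := by
    rw [hA, Finset.card_image_of_injective]
    · simp
    · intro r s hrs
      simpa [Prod.ext_iff, Fin.ext_iff] using hrs
  have hcardB : B.card = 2 := by
    rw [hB]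
    rw [Finset.card_insert_of_notMem (by simp), Finset.card_singleton]
  rw [hcardA, hcardB]
  omega

lemma cut_mem_val {x : Fin 3 × Fin n} (hx : x ∈ (knp3Cut n)ᶜ) :
    (x.1.val = 1 → n - 1 ≤ x.2.val) ∧ (x.1.val ≠ 1 → x.2.val ≠ n - 1) := by
  simp only [Set.mem_compl_iff, knp3Cut, Set.mem_setOf_eq] at hx
  push_neg at hx
  constructor
  · intro h
    exact hx.1 (Fin.ext h)
  · intro h
    exact hx.2 (fun he => h (congrArg Fin.val he))

lemma cut_adj_row {a b : ↥(knp3Cut n)ᶜ}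
    (h : ((knp3 n).induce (knp3Cut n)ᶜ).Adj a b) :
    (a : Fin 3 × Fin n).1 = (b : Fin 3 × Fin n).1 := by
  have h' : (knp3 n).Adj (a : Fin 3 × Fin n) (b : Fin 3 × Fin n) := h
  rcases adj_cases h' with ⟨h1, _⟩ | ⟨h1, h2⟩
  · exact h1
  · exfalso
    have ha := cut_mem_val a.2
    have hb := cut_mem_val b.2
    have hcol : (a : Fin 3 × Fin n).2.val = (b : Fin 3 × Fin n).2.val := congrArg Fin.val h1
    have hia := (a : Fin 3 × Fin n).1.isLt
    have hib := (b : Fin 3 × Fin n).1.isLt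
    have hpa := (a : Fin 3 × Fin n).2.isLt
    omega

lemma cut_reach_row {a b : ↥(knp3Cut n)ᶜ}
    (h : ((knp3 n).induce (knp3Cut n)ᶜ).Reachable a b) :
    (a : Fin 3 × Fin n).1 = (b : Fin 3 × Fin n).1 := by
  have h' := (SimpleGraph.reachable_iff_reflTransGen a b).mp h
  clear h
  induction h' with
  | refl => rfl
  | tail _ hadj ih => exact ih.trans (cut_adj_row hadj)

lemma cut_numComp (hn : 3 ≤ n) :
    Nat.card ((knp3 n).induce (knp3Cut n)ᶜ).ConnectedComponent = 3 := by
  have hrow : ∀ x : ↥(knp3Cut n)ᶜ,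
      ((((knp3 n).induce (knp3Cut n)ᶜ).connectedComponentMk x).out : Fin 3 × Fin n).1
        = (x : Fin 3 × Fin n).1 := by
    intro x
    exact cut_reach_row (ConnectedComponent.exact
      ((((knp3 n).induce (knp3Cut n)ᶜ).connectedComponentMk x).out_eq))
  have hsurj : Function.Surjective
      (fun C : ((knp3 n).induce (knp3Cut n)ᶜ).ConnectedComponent =>
        (C.out : Fin 3 × Fin n).1) := by
    intro i
    have hmem : ∀ x : Fin 3 × Fin n,
        (x.1.val = 1 → n - 1 ≤ x.2.val) → (x.1.val ≠ 1 → x.2.val ≠ n - 1) →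
        x ∈ (knp3Cut n)ᶜ := by
      intro x h1 h2
      simp only [Set.mem_compl_iff, knp3Cut, Set.mem_setOf_eq]
      push_neg
      constructor
      · intro h
        exact h1 (congrArg Fin.val h)
      · intro h
        intro he
        exact h2 (fun hv => h (Fin.ext hv)) he
    have hi := i.isLt
    have h3 : i.val = 0 ∨ i.val = 1 ∨ i.val = 2 := by omega
    rcases h3 with hv | hv | hv
    · exact ⟨((knp3 n).induce (knp3Cut n)ᶜ).connectedComponentMk
        ⟨(i, ⟨0, by omega⟩), hmem _ (fun h => absurd (show i.val = 1 from h) (by omega))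
          (fun _ => by show (0 : ℕ) ≠ n - 1; omega)⟩, hrow _⟩
    · exact ⟨((knp3 n).induce (knp3Cut n)ᶜ).connectedComponentMk
        ⟨(i, ⟨n - 1, by omega⟩), hmem _ (fun _ => by show n - 1 ≤ n - 1; omega)
          (fun h => absurd hv h)⟩, hrow _⟩
    · exact ⟨((knp3 n).induce (knp3Cut n)ᶜ).connectedComponentMk
        ⟨(i, ⟨0, by omega⟩), hmem _ (fun h => absurd (show i.val = 1 from h) (by omega))
          (fun _ => by show (0 : ℕ) ≠ n - 1; omega)⟩, hrow _⟩
  have := Nat.card_eq_of_bijective _ ⟨out_row_injective (knp3Cut n), hsurj⟩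
  simpa using this

end Knp3Aux

/-- for `n ≥ 3`, the toughness of `K_n □ P_3` equals `(n+1)/3`:
every vertex set `S` with `ω(G − S) ≥ 2` satisfies `3|S| ≥ (n+1)·ω(G − S)`, and
the displayed set `S` satisfies `|S| = n + 1` and `ω(G − S) = 3`. -/
theorem knp3_toughness (n : ℕ) (hn : 3 ≤ n) :
    (∀ S : Set (Fin 3 × Fin n), 2 ≤ numComp (knp3 n) S →
      (n + 1) * numComp (knp3 n) S ≤ 3 * S.ncard) ∧
    (knp3Cut n).ncard = n + 1 ∧
    numComp (knp3 n) (knp3Cut n) = 3 := by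
  refine ⟨?_, Knp3Aux.cut_ncard hn, Knp3Aux.cut_numComp hn⟩
  intro S hω
  unfold numComp at hω ⊢
  have h3 := Knp3Aux.comp_le_three (n := n) S
  have hge := Knp3Aux.ncard_ge hω
  have hcase : Nat.card ((knp3 n).induce Sᶜ).ConnectedComponent = 2 ∨
      Nat.card ((knp3 n).induce Sᶜ).ConnectedComponent = 3 := by omega
  rcases hcase with h | h
  · rw [h]; omega
  · have hsucc := Knp3Aux.ncard_ge_succ (S := S) (by omega)
    rw [h]; omega
end

section
/- Let n ≥ 3 be an integer and let G be the Cartesian product K_n □ P_3, with vertex set {v_{i,p} : i ∈ {1,2,3}, 1 ≤ p ≤ n} where for each i the vertices v_{i,1}, …, v_{i,n} form a complete graph, and v_{1,p} is adjacent to v_{2,p} and v_{2,p} is adjacent to v_{3,p} for each p. If S is a vertex set with ω(G − S) ≥ 2 and |S| ≤ n, then ω(G − S) = 2 and |S ∩ {v_{1,p}, v_{2,p}, v_{3,p}}| = 1 for every 1 ≤ p ≤ n; in particular |S| = n. -/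
open SimpleGraph

section Aux

variable {n : ℕ}

lemma knp3_adj_defeq {i j : Fin 3} {p q : Fin n} :
    (knp3 n).Adj (i, p) (j, q) ↔ ((i, p) : Fin 3 × Fin n) ≠ (j, q) ∧
      (((i = j ∧ p ≠ q) ∨ (p = q ∧ i.val + 1 = j.val)) ∨
       ((j = i ∧ q ≠ p) ∨ (q = p ∧ j.val + 1 = i.val))) :=
  Iff.rfl

lemma knp3_adj_row {i : Fin 3} {p q : Fin n} (h : p ≠ q) :
    (knp3 n).Adj (i, p) (i, q) := by
  rw [knp3_adj_defeq]
  exact ⟨by simp [Prod.ext_iff, h], Or.inl (Or.inl ⟨rfl, h⟩)⟩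

lemma knp3_adj_col {i j : Fin 3} {p : Fin n}
    (h : i.val + 1 = j.val ∨ j.val + 1 = i.val) :
    (knp3 n).Adj (i, p) (j, p) := by
  have hne : i ≠ j := by
    intro hh; subst hh; omega
  rw [knp3_adj_defeq]
  refine ⟨by simp [Prod.ext_iff, hne], ?_⟩
  rcases h with h | h
  · exact Or.inl (Or.inr ⟨rfl, h⟩)
  · exact Or.inr (Or.inr ⟨rfl, h⟩)

lemma knp3_adj_elim {i j : Fin 3} {p q : Fin n} (h : (knp3 n).Adj (i, p) (j, q)) :
    (i = j ∧ p ≠ q) ∨ (p = q ∧ (i.val + 1 = j.val ∨ j.val + 1 = i.val)) := by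
  rw [knp3_adj_defeq] at h
  obtain ⟨-, h | h⟩ := h
  · rcases h with ⟨h1, h2⟩ | ⟨h1, h2⟩
    · exact Or.inl ⟨h1, h2⟩
    · exact Or.inr ⟨h1, Or.inl h2⟩
  · rcases h with ⟨h1, h2⟩ | ⟨h1, h2⟩
    · exact Or.inl ⟨h1.symm, h2.symm⟩
    · exact Or.inr ⟨h1.symm, Or.inr h2⟩

lemma induce_adj' {S : Set (Fin 3 × Fin n)} {x y : Fin 3 × Fin n}
    (hx : x ∈ Sᶜ) (hy : y ∈ Sᶜ)
    (h : (knp3 n).Adj x y) : ((knp3 n).induce Sᶜ).Adj ⟨x, hx⟩ ⟨y, hy⟩ := by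
  simpa using h

lemma reach_row {S : Set (Fin 3 × Fin n)} {i : Fin 3} {p q : Fin n}
    (hp : ((i, p) : Fin 3 × Fin n) ∈ Sᶜ) (hq : ((i, q) : Fin 3 × Fin n) ∈ Sᶜ) :
    ((knp3 n).induce Sᶜ).Reachable ⟨(i, p), hp⟩ ⟨(i, q), hq⟩ := by
  rcases eq_or_ne p q with rfl | h
  · exact Reachable.refl _
  · exact (induce_adj' hp hq (knp3_adj_row h)).reachable

lemma reach_col {S : Set (Fin 3 × Fin n)} {i j : Fin 3} {p : Fin n}
    (hij : i.val + 1 = j.val ∨ j.val + 1 = i.val)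
    (hi : ((i, p) : Fin 3 × Fin n) ∈ Sᶜ) (hj : ((j, p) : Fin 3 × Fin n) ∈ Sᶜ) :
    ((knp3 n).induce Sᶜ).Reachable ⟨(i, p), hi⟩ ⟨(j, p), hj⟩ :=
  (induce_adj' hi hj (knp3_adj_col hij)).reachable

lemma card_cc_le_one {V : Type*} (G : SimpleGraph V) (h : G.Preconnected) :
    Nat.card G.ConnectedComponent ≤ 1 := by
  have hs : Subsingleton G.ConnectedComponent := by
    constructor
    intro c d
    obtain ⟨v, rfl⟩ := c.exists_rep
    obtain ⟨w, rfl⟩ := d.exists_rep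
    exact ConnectedComponent.sound (h v w)
  rcases isEmpty_or_nonempty G.ConnectedComponent with he | hne
  · simp [Nat.card_of_isEmpty]
  · have : Unique G.ConnectedComponent := @Unique.mk' _ ⟨hne.some⟩ hs
    simp [Nat.card_unique]

lemma card_cc_eq_two {V : Type*} (G : SimpleGraph V) (f : V → Bool)
    (hadj : ∀ a b, G.Adj a b → f a = f b)
    (hconn : ∀ a b, f a = f b → G.Reachable a b)
    (hsurj : ∀ t, ∃ a, f a = t) :
    Nat.card G.ConnectedComponent = 2 := by
  have hwalk : ∀ (v w : V), G.Walk v w → f v = f w := by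
    intro v w p
    induction p with
    | nil => rfl
    | cons h q ih => exact (hadj _ _ h).trans ih
  let F : G.ConnectedComponent → Bool :=
    ConnectedComponent.lift f (fun v w p _ => hwalk v w p)
  have hbij : Function.Bijective F := by
    constructor
    · intro c d h
      obtain ⟨v, rfl⟩ := c.exists_rep
      obtain ⟨w, rfl⟩ := d.exists_rep
      exact ConnectedComponent.sound (hconn v w h)
    · intro t
      obtain ⟨a, ha⟩ := hsurj t
      exact ⟨G.connectedComponentMk a, ha⟩
  rw [Nat.card_eq_of_bijective F hbij]
  simp [Nat.card_eq_fintype_card]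

end Aux

section Main

variable {n : ℕ}

lemma main_aux (hn : 3 ≤ n) (S : Set (Fin 3 × Fin n)) (a b : Fin 3)
    (hab : (a.val = 0 ∧ b.val = 2) ∨ (a.val = 2 ∧ b.val = 0))
    (hcov : ∀ p : Fin n, (a, p) ∈ S ∨ ((1 : Fin 3), p) ∈ S)
    (hS : S.ncard ≤ n)
    (hnc : ¬ ((knp3 n).induce Sᶜ).Preconnected) :
    Nat.card ((knp3 n).induce Sᶜ).ConnectedComponent = 2 ∧
      (∀ p : Fin n, (S ∩ {x : Fin 3 × Fin n | x.2 = p}).ncard = 1) ∧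
      S.ncard = n := by
  classical
  have hnpos : 0 < n := by omega
  have hone : ((1 : Fin 3)).val = 1 := rfl
  have hba : b ≠ a := by
    intro h
    rcases hab with ⟨h1, h2⟩ | ⟨h1, h2⟩ <;> rw [h] at h2 <;> omega
  have hb1 : b ≠ 1 := by
    intro h
    rcases hab with ⟨h1, h2⟩ | ⟨h1, h2⟩ <;> rw [h, hone] at h2 <;> omega
  have ha1 : a ≠ 1 := by
    intro h
    rcases hab with ⟨h1, h2⟩ | ⟨h1, h2⟩ <;> rw [h, hone] at h1 <;> omega
  -- selector for each column
  set g : Fin n → Fin 3 := (fun p => if (a, p) ∈ S then a else 1) with hgdef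
  have hgmem : ∀ p, (g p, p) ∈ S := by
    intro p
    by_cases h : (a, p) ∈ S
    · simpa [hgdef, h] using h
    · have h2 := (hcov p).resolve_left h
      simpa [hgdef, h] using h2
  have hg_or : ∀ p, g p = a ∨ g p = 1 := by
    intro p
    by_cases h : (a, p) ∈ S <;> simp [hgdef, h]
  have hginj : Function.Injective (fun p : Fin n => ((g p, p) : Fin 3 × Fin n)) :=
    fun p q h => congrArg Prod.snd h
  have hTcard : (Set.range fun p : Fin n => ((g p, p) : Fin 3 × Fin n)).ncard = n := by
    rw [← Set.image_univ, Set.ncard_image_of_injective _ hginj, Set.ncard_univ]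
    simp
  have hSeq : S = Set.range fun p : Fin n => ((g p, p) : Fin 3 × Fin n) := by
    refine (Set.eq_of_subset_of_ncard_le ?_ ?_).symm
    · rintro x ⟨p, rfl⟩
      exact hgmem p
    · rw [hTcard]; exact hS
  have hScard : S.ncard = n := by rw [hSeq, hTcard]
  have hmemS : ∀ x ∈ S, x = (g x.2, x.2) := by
    intro x hx
    rw [hSeq] at hx
    obtain ⟨p, rfl⟩ := hx
    rfl
  have hcol : ∀ p : Fin n, (S ∩ {x : Fin 3 × Fin n | x.2 = p}) = {(g p, p)} := by
    intro p
    ext x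
    simp only [Set.mem_inter_iff, Set.mem_setOf_eq, Set.mem_singleton_iff]
    constructor
    · rintro ⟨hx, hx2⟩
      rw [hmemS x hx, hx2]
    · rintro rfl
      exact ⟨hgmem p, rfl⟩
  have hbnot : ∀ p, ((b, p) : Fin 3 × Fin n) ∉ S := by
    intro p hp
    have hb : b = g p := congrArg Prod.fst (hmemS _ hp)
    rcases hg_or p with h | h <;> rw [h] at hb
    · exact hba hb
    · exact hb1 hb
  have h1b : (1 : Fin 3).val + 1 = b.val ∨ b.val + 1 = (1 : Fin 3).val := by
    rw [hone]
    rcases hab with ⟨h1, h2⟩ | ⟨h1, h2⟩ <;> omega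
  -- the coloring
  set H := (knp3 n).induce Sᶜ with hHdef
  set f : ↥Sᶜ → Bool := (fun v => decide (v.1.1 = a)) with hfdef
  have hfval : ∀ (x : Fin 3 × Fin n) (hx : x ∈ Sᶜ), f ⟨x, hx⟩ = decide (x.1 = a) := by
    intro x hx; rfl
  have hadj : ∀ u v : ↥Sᶜ, H.Adj u v → f u = f v := by
    rintro ⟨⟨i, p⟩, hu⟩ ⟨⟨j, q⟩, hv⟩ huv
    have hadj' : (knp3 n).Adj (i, p) (j, q) := by simpa [hHdef] using huv
    rcases knp3_adj_elim hadj' with ⟨rfl, -⟩ | ⟨rfl, hcons⟩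
    · rfl
    · rw [hfval, hfval]
      rw [decide_eq_decide]
      constructor
      · intro h'
        have hia : i = a := h'
        subst hia
        have hj1 : j = (1 : Fin 3) := by
          have h3 := j.isLt
          rcases hcons with hc | hc <;> rcases hab with ⟨h1, -⟩ | ⟨h1, -⟩ <;>
            (apply Fin.ext; rw [hone]; omega)
        subst hj1
        rcases hcov p with h | h
        · exact absurd h hu
        · exact absurd h hv
      · intro h'
        have hja : j = a := h'
        subst hja
        have hi1 : i = (1 : Fin 3) := by
          have h3 := i.isLt
          rcases hcons with hc | hc <;> rcases hab with ⟨h1, -⟩ | ⟨h1, -⟩ <;>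
            (apply Fin.ext; rw [hone]; omega)
        subst hi1
        rcases hcov p with h | h
        · exact absurd h hv
        · exact absurd h hu
  have hkey : ∀ (k : Fin 3) (r : Fin n) (hk : ((k, r) : Fin 3 × Fin n) ∈ Sᶜ), k ≠ a →
      H.Reachable ⟨(k, r), hk⟩ ⟨(b, r), hbnot r⟩ := by
    intro k r hk hka
    rcases eq_or_ne k b with rfl | hkb
    · exact Reachable.refl _
    · have hk1 : k = 1 := by
        have h3 := k.isLt
        have h4 : k.val ≠ a.val := fun h => hka (Fin.ext h)
        have h5 : k.val ≠ b.val := fun h => hkb (Fin.ext h)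
        apply Fin.ext
        rw [hone]
        rcases hab with ⟨h1, h2⟩ | ⟨h1, h2⟩ <;> omega
      subst hk1
      exact reach_col h1b hk (hbnot r)
  have hreach : ∀ u v : ↥Sᶜ, f u = f v → H.Reachable u v := by
    rintro ⟨⟨i, p⟩, hu⟩ ⟨⟨j, q⟩, hv⟩ hf
    rw [hfval, hfval, decide_eq_decide] at hf
    by_cases hia : i = a
    · have hja : j = a := hf.mp hia
      subst hia; subst hja
      exact reach_row hu hv
    · have hja : j ≠ a := fun h => hia (hf.mpr h)
      exact ((hkey i p hu hia).trans (reach_row (hbnot p) (hbnot q))).trans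
        (hkey j q hv hja).symm
  have hsurj : ∀ t : Bool, ∃ v : ↥Sᶜ, f v = t := by
    intro t
    cases t
    · refine ⟨⟨(b, ⟨0, hnpos⟩), hbnot _⟩, ?_⟩
      rw [hfval]
      simp [hba]
    · by_cases hall : ∀ p : Fin n, ((a, p) : Fin 3 × Fin n) ∈ S
      · exfalso
        apply hnc
        have hnotS : ∀ (k : Fin 3) (r : Fin n), k ≠ a → ((k, r) : Fin 3 × Fin n) ∉ S := by
          intro k r hk hmem
          have := hmemS _ hmem
          have hk' : k = g r := congrArg Prod.fst this
          have hg : g r = a := by simp [hgdef, hall r]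
          exact hk (hk'.trans hg)
      -- everything reaches (1, 0)
        have h1not : ∀ r : Fin n, ((1, r) : Fin 3 × Fin n) ∉ S := fun r => hnotS 1 r ha1.symm
        have route : ∀ (v : ↥Sᶜ),
            H.Reachable v ⟨((1 : Fin 3), ⟨0, hnpos⟩), h1not _⟩ := by
          rintro ⟨⟨i, p⟩, hv⟩
          have hia : i ≠ a := by
            intro h; subst h; exact hv (hall p)
          rcases eq_or_ne i 1 with rfl | hi1
          · exact reach_row hv (h1not _)
          · have hib : i = b := by
              have h3 := i.isLt
              have h4 : i.val ≠ a.val := fun h => hia (Fin.ext h)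
              have h5 : i.val ≠ (1 : Fin 3).val := fun h => hi1 (Fin.ext h)
              apply Fin.ext
              rw [hone] at h5
              rcases hab with ⟨h1, h2⟩ | ⟨h1, h2⟩ <;> omega
            subst hib
            exact ((reach_col (Or.symm h1b) hv (h1not p)).trans
              (reach_row (h1not p) (h1not _)))
        intro u v
        exact (route u).trans (route v).symm
      · push_neg at hall
        obtain ⟨p, hp⟩ := hall
        refine ⟨⟨(a, p), hp⟩, ?_⟩
        rw [hfval]
        simp
  exact ⟨card_cc_eq_two H f hadj hreach hsurj, fun p => by
    rw [hcol p]; exact Set.ncard_singleton _, hScard⟩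

end Main

/-- for `n ≥ 3`, if `S` is a vertex set of `K_n □ P_3` with
`ω(G − S) ≥ 2` and `|S| ≤ n`, then `ω(G − S) = 2` and `S` meets each column
`{v_{1,p}, v_{2,p}, v_{3,p}}` in exactly one vertex; in particular `|S| = n`. -/
theorem knp3_small_cutsets (n : ℕ) (hn : 3 ≤ n) (S : Set (Fin 3 × Fin n))
    (hω : 2 ≤ numComp (knp3 n) S) (hS : S.ncard ≤ n) :
    numComp (knp3 n) S = 2 ∧
    (∀ p : Fin n, (S ∩ {x : Fin 3 × Fin n | x.2 = p}).ncard = 1) ∧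
    S.ncard = n := by
  classical
  have hω' : 2 ≤ Nat.card ((knp3 n).induce Sᶜ).ConnectedComponent := hω
  have hnc : ¬ ((knp3 n).induce Sᶜ).Preconnected := by
    intro h
    have h1 := card_cc_le_one _ h
    omega
  by_cases hA0 : ∀ p : Fin n, ((0 : Fin 3), p) ∈ S ∨ ((1 : Fin 3), p) ∈ S
  · exact main_aux hn S 0 2 (Or.inl ⟨rfl, rfl⟩) hA0 hS hnc
  · by_cases hA2 : ∀ p : Fin n, ((2 : Fin 3), p) ∈ S ∨ ((1 : Fin 3), p) ∈ S
    · exact main_aux hn S 2 0 (Or.inr ⟨rfl, rfl⟩) hA2 hS hnc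
    · exfalso
      push_neg at hA0 hA2
      obtain ⟨p0, h00, h01⟩ := hA0
      obtain ⟨p2, h20, h21⟩ := hA2
      apply hnc
      have route : ∀ v : ↥Sᶜ,
          ((knp3 n).induce Sᶜ).Reachable v ⟨((1 : Fin 3), p0), h01⟩ := by
        rintro ⟨⟨i, p⟩, hv⟩
        fin_cases i
        · exact (reach_row hv h00).trans
            (reach_col (by decide) h00 h01)
        · exact reach_row hv h01
        · exact ((reach_row hv h20).trans
            (reach_col (by decide) h20 h21)).trans (reach_row h21 h01)
      intro u v
      exact (route u).trans (route v).symm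
end
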